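/- arXiv:0807.4559 — 5 statements merged into one kernel-verified Lean document; each statement's English description precedes it below -/
import Mathlib

section
/- Let V be a real inner product space of dimension 3 with inner product g. If R₁ and R₂ are algebraic curvature tensors on V (multilinear maps V × V × V × V → ℝ with the curvature symmetries: antisymmetry in the first two and last two arguments, pair-exchange symmetry, and the first Bianchi identity) whose Ricci contractions agree, i.e. Σᵢ R₁(eᵢ, y, eᵢ, w) = Σᵢ R₂(eᵢ, y, eᵢ, w) for all y, w ∈ V and an orthonormal basis (eᵢ), then R₁ = R₂. In other words, in 3 dimensions an algebraic curvature tensor is uniquely determined by its Ricci contraction. -/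
lemma curv_aux (f : Fin 3 → Fin 3 → Fin 3 → Fin 3 → ℝ)
    (h1 : ∀ i j k l, f i j k l = - f j i k l)
    (h2 : ∀ i j k l, f i j k l = - f i j l k)
    (h3 : ∀ i j k l, f i j k l = f k l i j)
    (hric : ∀ j l, f 0 j 0 l + f 1 j 1 l + f 2 j 2 l = 0) :
    ∀ i j k l, f i j k l = 0 := by
  have hd1 : ∀ i k l, f i i k l = 0 := fun i k l => by have := h1 i i k l; linarith
  have hd2 : ∀ i j k, f i j k k = 0 := fun i j k => by have := h2 i j k k; linarith
  -- six key components
  have ha : f 0 1 0 1 = 0 := by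
    linarith [hric 0 0, hric 1 1, hric 2 2, hd1 0 0 0, hd1 1 1 1, hd1 2 2 2,
      h1 1 0 1 0, h2 0 1 1 0, h1 2 0 2 0, h2 0 2 2 0, h1 2 1 2 1, h2 1 2 2 1,
      h1 0 1 0 1, h2 1 0 0 1, h1 0 2 0 2, h2 2 0 0 2, h1 1 2 1 2, h2 2 1 1 2]
  have hdd : f 0 2 0 2 = 0 := by
    linarith [hric 0 0, hric 1 1, hric 2 2, hd1 0 0 0, hd1 1 1 1, hd1 2 2 2,
      h1 1 0 1 0, h2 0 1 1 0, h1 2 0 2 0, h2 0 2 2 0, h1 2 1 2 1, h2 1 2 2 1,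
      h1 0 1 0 1, h2 1 0 0 1, h1 0 2 0 2, h2 2 0 0 2, h1 1 2 1 2, h2 2 1 1 2]
  have hg : f 1 2 1 2 = 0 := by
    linarith [hric 0 0, hric 1 1, hric 2 2, hd1 0 0 0, hd1 1 1 1, hd1 2 2 2,
      h1 1 0 1 0, h2 0 1 1 0, h1 2 0 2 0, h2 0 2 2 0, h1 2 1 2 1, h2 1 2 2 1,
      h1 0 1 0 1, h2 1 0 0 1, h1 0 2 0 2, h2 2 0 0 2, h1 1 2 1 2, h2 2 1 1 2]
  have hb : f 0 1 0 2 = 0 := by linarith [hric 1 2, hd1 1 1 2, hd2 2 1 2]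
  have hc : f 0 1 1 2 = 0 := by linarith [hric 0 2, hd1 0 0 2, hd2 2 0 2, h1 1 0 1 2]
  have hf : f 0 2 1 2 = 0 := by
    linarith [hric 0 1, hd1 0 0 1, hd2 1 0 1, h1 2 0 2 1, h2 0 2 2 1]
  have hfin : ∀ m : Fin 3, m = 0 ∨ m = 1 ∨ m = 2 := by decide
  have p01 : ∀ k l, f 0 1 k l = 0 := by
    intro k l
    rcases hfin k with rfl | rfl | rfl <;> rcases hfin l with rfl | rfl | rfl <;>
      linarith [ha, hb, hc, hd2 0 1 0, hd2 0 1 1, hd2 0 1 2,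
        h2 0 1 0 1, h2 0 1 0 2, h2 0 1 1 2,
        h3 0 1 2 0, h1 2 0 0 1, h3 0 2 0 1,
        h3 0 1 2 1, h1 2 1 0 1, h3 1 2 0 1]
  have p02 : ∀ k l, f 0 2 k l = 0 := by
    intro k l
    rcases hfin k with rfl | rfl | rfl <;> rcases hfin l with rfl | rfl | rfl <;>
      linarith [hdd, hf, hb, hd2 0 2 0, hd2 0 2 1, hd2 0 2 2,
        h2 0 2 0 1, h2 0 2 0 2, h2 0 2 1 2, h3 0 2 0 1]
  have p12 : ∀ k l, f 1 2 k l = 0 := by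
    intro k l
    rcases hfin k with rfl | rfl | rfl <;> rcases hfin l with rfl | rfl | rfl <;>
      linarith [hg, hc, hf, hd2 1 2 0, hd2 1 2 1, hd2 1 2 2,
        h2 1 2 0 1, h2 1 2 0 2, h2 1 2 1 2, h3 1 2 0 1, h3 1 2 0 2]
  intro i j
  rcases hfin i with rfl | rfl | rfl <;> rcases hfin j with rfl | rfl | rfl <;> intro k l <;>
    linarith [h1 0 0 k l, h1 0 1 k l, h1 0 2 k l, h1 1 0 k l, h1 1 1 k l,
      h1 1 2 k l, h1 2 0 k l, h1 2 1 k l, h1 2 2 k l,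
      p01 k l, p02 k l, p12 k l, hd1 0 k l, hd1 1 k l, hd1 2 k l]



open scoped RealInnerProductSpace

/-- In 3 dimensions an algebraic curvature tensor is uniquely determined by its
Ricci contraction: if two algebraic curvature tensors on a 3-dimensional real inner
product space have the same Ricci contraction, they are equal. -/
theorem curvature_eq_of_ricci_eq_dim3
    (V : Type*) [NormedAddCommGroup V] [InnerProductSpace ℝ V]
    (hdim : Module.finrank ℝ V = 3)
    (e : OrthonormalBasis (Fin 3) ℝ V)
    (R₁ R₂ : V →ₗ[ℝ] V →ₗ[ℝ] V →ₗ[ℝ] V →ₗ[ℝ] ℝ)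
    (hanti₁₁ : ∀ x y z w : V, R₁ x y z w = - R₁ y x z w)
    (hanti₁₂ : ∀ x y z w : V, R₁ x y z w = - R₁ x y w z)
    (hpair₁ : ∀ x y z w : V, R₁ x y z w = R₁ z w x y)
    (hbianchi₁ : ∀ x y z w : V, R₁ x y z w + R₁ x z w y + R₁ x w y z = 0)
    (hanti₂₁ : ∀ x y z w : V, R₂ x y z w = - R₂ y x z w)
    (hanti₂₂ : ∀ x y z w : V, R₂ x y z w = - R₂ x y w z)
    (hpair₂ : ∀ x y z w : V, R₂ x y z w = R₂ z w x y)
    (hbianchi₂ : ∀ x y z w : V, R₂ x y z w + R₂ x z w y + R₂ x w y z = 0)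
    (hRic : ∀ y w : V, ∑ i, R₁ (e i) y (e i) w = ∑ i, R₂ (e i) y (e i) w) :
    R₁ = R₂ := by
  set f : Fin 3 → Fin 3 → Fin 3 → Fin 3 → ℝ :=
    fun i j k l => R₁ (e i) (e j) (e k) (e l) - R₂ (e i) (e j) (e k) (e l) with hf
  have hz : ∀ i j k l, f i j k l = 0 := by
    apply curv_aux
    · intro i j k l
      have := hanti₁₁ (e i) (e j) (e k) (e l)
      have := hanti₂₁ (e i) (e j) (e k) (e l)
      simp only [hf]; linarith
    · intro i j k l
      have := hanti₁₂ (e i) (e j) (e k) (e l)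
      have := hanti₂₂ (e i) (e j) (e k) (e l)
      simp only [hf]; linarith
    · intro i j k l
      have := hpair₁ (e i) (e j) (e k) (e l)
      have := hpair₂ (e i) (e j) (e k) (e l)
      simp only [hf]; linarith
    · intro j l
      have := hRic (e j) (e l)
      simp only [Fin.sum_univ_three] at this
      simp only [hf]; linarith
  refine e.toBasis.ext fun i => e.toBasis.ext fun j => e.toBasis.ext fun k =>
    e.toBasis.ext fun l => ?_
  have := hz i j k l
  simp only [hf] at this
  simp only [OrthonormalBasis.coe_toBasis]
  linarith
end

section
/- Let V be a real inner product space of dimension 3 with inner product g, and let S be a symmetric bilinear form on V. Define R : V × V × V × V → ℝ by R(x,y,z,w) = g(x,z)·S(y,w) − g(x,w)·S(y,z) + g(y,w)·S(x,z) − g(y,z)·S(x,w) − (s/2)·(g(x,z)g(y,w) − g(x,w)g(y,z)), where s = Σᵢ S(eᵢ,eᵢ) for an orthonormal basis (eᵢ) of V. privacy Then R is an algebraic curvature tensor on V (it is multilinear, antisymmetric in the first two and last two arguments, symmetric under pair exchange, and satisfies the first Bianchi identity), and its Ricci contraction equals S: Σᵢ R(eᵢ, y, eᵢ, w) = S(y,w)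 for all y,w ∈ V. Hence in 3 dimensions every symmetric bilinear form arises as the Ricci contraction of an algebraic curvature tensor. -/
open scoped RealInnerProductSpace

/-- In 3 dimensions every symmetric bilinear form `S` arises as the Ricci contraction of an
algebraic curvature tensor: the tensor `R` built from `S` and the metric by the displayed
formula is multilinear, antisymmetric in its first two and in its last two arguments, symmetric
under pair exchange, satisfies the first Bianchi identity, and has Ricci contraction `S`. -/
theorem symm_bilinear_is_ricci_of_curvature_dim3
    (V : Type*) [NormedAddCommGroup V] [InnerProductSpace ℝ V]
    (hdim : Module.finrank ℝ V = 3)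
    (e : OrthonormalBasis (Fin 3) ℝ V)
    (S : V →ₗ[ℝ] V →ₗ[ℝ] ℝ)
    (hS : ∀ x y : V, S x y = S y x)
    (s : ℝ) (hs : s = ∑ i, S (e i) (e i))
    (R : V → V → V → V → ℝ)
    (hR : ∀ x y z w : V,
      R x y z w =
        ⟪x, z⟫ * S y w - ⟪x, w⟫ * S y z + ⟪y, w⟫ * S x z - ⟪y, z⟫ * S x w
          - (s / 2) * (⟪x, z⟫ * ⟪y, w⟫ - ⟪x, w⟫ * ⟪y, z⟫)) :
    (∀ (a : ℝ) (x x' y z w : V),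
        R (a • x + x') y z w = a * R x y z w + R x' y z w) ∧
    (∀ (a : ℝ) (x y y' z w : V),
        R x (a • y + y') z w = a * R x y z w + R x y' z w) ∧
    (∀ (a : ℝ) (x y z z' w : V),
        R x y (a • z + z') w = a * R x y z w + R x y z' w) ∧
    (∀ (a : ℝ) (x y z w w' : V),
        R x y z (a • w + w') = a * R x y z w + R x y z w') ∧
    (∀ x y z w : V, R x y z w = - R y x z w) ∧
    (∀ x y z w : V, R x y z w = - R x y w z) ∧
    (∀ x y z w : V, R x y z w = R z w x y) ∧
    (∀ x y z w : V, R x y z w + R x z w y + R x w y z = 0) ∧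
    (∀ y w : V, ∑ i, R (e i) y (e i) w = S y w) := by
  have key : ∀ (f : V →ₗ[ℝ] ℝ) (w : V), ∑ i, ⟪e i, w⟫ * f (e i) = f w := by
    intro f w
    conv_rhs => rw [← e.sum_repr w]
    rw [map_sum]
    simp [e.repr_apply_apply, smul_eq_mul]
  have key2 : ∀ y w : V, ∑ i, ⟪e i, w⟫ * ⟪y, e i⟫ = ⟪y, w⟫ := by
    intro y w
    conv_rhs => rw [← e.sum_repr w]
    rw [inner_sum]
    simp [e.repr_apply_apply, real_inner_smul_right, mul_comm]
  have hdiag : ∀ i : Fin 3, ⟪e i, (e i : V)⟫ = 1 := fun i => by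
    rw [real_inner_self_eq_norm_sq, e.orthonormal.1 i]; norm_num
  refine ⟨?_, ?_, ?_, ?_, ?_, ?_, ?_, ?_, ?_⟩
  · intro a x x' y z w
    simp only [hR, inner_add_left, real_inner_smul_left, map_add, map_smul,
      LinearMap.add_apply, LinearMap.smul_apply, smul_eq_mul]
    ring
  · intro a x y y' z w
    simp only [hR, inner_add_left, real_inner_smul_left, map_add, map_smul,
      LinearMap.add_apply, LinearMap.smul_apply, smul_eq_mul]
    ring
  · intro a x y z z' w
    simp only [hR, inner_add_right, real_inner_smul_right, map_add, map_smul,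
      LinearMap.add_apply, LinearMap.smul_apply, smul_eq_mul]
    ring
  · intro a x y z w w'
    simp only [hR, inner_add_right, real_inner_smul_right, map_add, map_smul,
      LinearMap.add_apply, LinearMap.smul_apply, smul_eq_mul]
    ring
  · intro x y z w; simp only [hR]; ring
  · intro x y z w; simp only [hR]; ring
  · intro x y z w
    simp only [hR, real_inner_comm x z, real_inner_comm x w, real_inner_comm y z,
      real_inner_comm y w, hS x z, hS x w, hS y z, hS y w]
    ring
  · intro x y z w
    simp only [hR, real_inner_comm, hS x y, hS x z, hS x w, hS y z, hS y w, hS z w]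
    ring
  · intro y w
    have E : ∑ i, R (e i) y (e i) w =
        ((∑ i, ⟪e i, (e i : V)⟫ * S y w - ∑ i, ⟪e i, w⟫ * S y (e i))
          + ∑ i, ⟪y, w⟫ * S (e i) (e i)) - (∑ i, ⟪y, e i⟫ * S (e i) w)
          - ∑ i, (s / 2) * (⟪e i, (e i : V)⟫ * ⟪y, w⟫ - ⟪e i, w⟫ * ⟪y, e i⟫) := by
      simp only [hR]
      rw [← Finset.sum_sub_distrib, ← Finset.sum_add_distrib, ← Finset.sum_sub_distrib,
        ← Finset.sum_sub_distrib]
    have hA : ∑ i, ⟪e i, (e i : V)⟫ * S y w = 3 * S y w := by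
      simp [hdiag]
    have hB : ∑ i, ⟪e i, w⟫ * S y (e i) = S y w := key (S y) w
    have hC : ∑ i, ⟪y, w⟫ * S (e i) (e i) = ⟪y, w⟫ * s := by
      rw [← Finset.mul_sum, ← hs]
    have hD : ∑ i, ⟪y, e i⟫ * S (e i) w = S y w := by
      have : ∀ i : Fin 3, ⟪y, e i⟫ * S (e i) w = ⟪e i, y⟫ * S w (e i) := by
        intro i; rw [real_inner_comm, hS (e i) w]
      rw [Finset.sum_congr rfl fun i _ => this i, key (S w) y, hS w y]
    have hE : ∑ i, (s / 2) * (⟪e i, (e i : V)⟫ * ⟪y, w⟫ - ⟪e i, w⟫ * ⟪y, e i⟫)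
        = s * ⟪y, w⟫ := by
      rw [← Finset.mul_sum, Finset.sum_sub_distrib, ← Finset.sum_mul, key2 y w]
      simp [hdiag]; ring
    rw [E, hA, hB, hC, hD, hE]; ring
end

section
/- Let V be a real inner product space of dimension 3 with inner product g, and let R be an algebraic curvature tensor on V (a multilinear map V × V × V × V → ℝ that is antisymmetric in its first two and last two arguments, symmetric under exchange of the first pair with the second pair, and satisfies the first Bianchi identity). If the Ricci contraction of R is proportional to the metric, i.e. there is a real constant C with Σᵢ R(eᵢ, y, eᵢ, w) = C·g(y,w) for all y,w ∈ V and an orthonormal basis (eᵢ), then R has the constant-curvature form: for all x,y,z,w ∈ V, R(x,y,z,w) = (C/2)·(g(x,z)g(y,w) − g(x,w)g(y,z)). -/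
open scoped RealInnerProductSpace

set_option maxHeartbeats 4000000 in
/-- In 3 dimensions, an algebraic curvature tensor whose Ricci contraction is
proportional to the metric, `Ric = C·g`, has the constant-curvature form
`R(x,y,z,w) = (C/2)(g(x,z)g(y,w) − g(x,w)g(y,z))`. -/
theorem curvature_const_form_of_ricci_proportional_dim3
    (V : Type*) [NormedAddCommGroup V] [InnerProductSpace ℝ V]
    (hdim : Module.finrank ℝ V = 3)
    (e : OrthonormalBasis (Fin 3) ℝ V)
    (R : V →ₗ[ℝ] V →ₗ[ℝ] V →ₗ[ℝ] V →ₗ[ℝ] ℝ)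
    (hanti₁ : ∀ x y z w : V, R x y z w = - R y x z w)
    (hanti₂ : ∀ x y z w : V, R x y z w = - R x y w z)
    (hpair : ∀ x y z w : V, R x y z w = R z w x y)
    (hbianchi : ∀ x y z w : V, R x y z w + R x z w y + R x w y z = 0)
    (C : ℝ)
    (hRic : ∀ y w : V, ∑ i, R (e i) y (e i) w = C * ⟪y, w⟫) :
    ∀ x y z w : V, R x y z w = (C / 2) * (⟪x, z⟫ * ⟪y, w⟫ - ⟪x, w⟫ * ⟪y, z⟫) := by
  have hON : ∀ i j : Fin 3, ⟪e i, e j⟫ = if i = j then (1:ℝ) else 0 :=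
    fun i j => orthonormal_iff_ite.mp e.orthonormal i j
  have hR00 : R (e 0) (e 0) (e 0) (e 0) + R (e 1) (e 0) (e 1) (e 0) + R (e 2) (e 0) (e 2) (e 0) = C := by
    have h := hRic (e 0) (e 0)
    rw [Fin.sum_univ_three, hON] at h
    simpa using h
  have hR01 : R (e 0) (e 0) (e 0) (e 1) + R (e 1) (e 0) (e 1) (e 1) + R (e 2) (e 0) (e 2) (e 1) = 0 := by
    have h := hRic (e 0) (e 1)
    rw [Fin.sum_univ_three, hON] at h
    simpa using h
  have hR02 : R (e 0) (e 0) (e 0) (e 2) + R (e 1) (e 0) (e 1) (e 2) + R (e 2) (e 0) (e 2) (e 2) = 0 := by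
    have h := hRic (e 0) (e 2)
    rw [Fin.sum_univ_three, hON] at h
    simpa using h
  have hR10 : R (e 0) (e 1) (e 0) (e 0) + R (e 1) (e 1) (e 1) (e 0) + R (e 2) (e 1) (e 2) (e 0) = 0 := by
    have h := hRic (e 1) (e 0)
    rw [Fin.sum_univ_three, hON] at h
    simpa using h
  have hR11 : R (e 0) (e 1) (e 0) (e 1) + R (e 1) (e 1) (e 1) (e 1) + R (e 2) (e 1) (e 2) (e 1) = C := by
    have h := hRic (e 1) (e 1)
    rw [Fin.sum_univ_three, hON] at h
    simpa using h
  have hR12 : R (e 0) (e 1) (e 0) (e 2) + R (e 1) (e 1) (e 1) (e 2) + R (e 2) (e 1) (e 2) (e 2) = 0 := by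
    have h := hRic (e 1) (e 2)
    rw [Fin.sum_univ_three, hON] at h
    simpa using h
  have hR20 : R (e 0) (e 2) (e 0) (e 0) + R (e 1) (e 2) (e 1) (e 0) + R (e 2) (e 2) (e 2) (e 0) = 0 := by
    have h := hRic (e 2) (e 0)
    rw [Fin.sum_univ_three, hON] at h
    simpa using h
  have hR21 : R (e 0) (e 2) (e 0) (e 1) + R (e 1) (e 2) (e 1) (e 1) + R (e 2) (e 2) (e 2) (e 1) = 0 := by
    have h := hRic (e 2) (e 1)
    rw [Fin.sum_univ_three, hON] at h
    simpa using h
  have hR22 : R (e 0) (e 2) (e 0) (e 2) + R (e 1) (e 2) (e 1) (e 2) + R (e 2) (e 2) (e 2) (e 2) = C := by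
    have h := hRic (e 2) (e 2)
    rw [Fin.sum_univ_three, hON] at h
    simpa using h
  have hMaa : R (e 0) (e 1) (e 0) (e 1) = C / 2 := by linarith [hR00, hR11, hR22, hanti₁ (e 0) (e 0) (e 0) (e 0), hanti₁ (e 1) (e 1) (e 1) (e 1), hanti₁ (e 2) (e 2) (e 2) (e 2), hanti₁ (e 1) (e 0) (e 1) (e 0), hanti₂ (e 0) (e 1) (e 1) (e 0), hanti₁ (e 2) (e 0) (e 2) (e 0), hanti₂ (e 0) (e 2) (e 2) (e 0), hanti₁ (e 2) (e 1) (e 2) (e 1), hanti₂ (e 1) (e 2) (e 2) (e 1)]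
  have hMbb : R (e 0) (e 2) (e 0) (e 2) = C / 2 := by linarith [hR00, hR11, hR22, hanti₁ (e 0) (e 0) (e 0) (e 0), hanti₁ (e 1) (e 1) (e 1) (e 1), hanti₁ (e 2) (e 2) (e 2) (e 2), hanti₁ (e 1) (e 0) (e 1) (e 0), hanti₂ (e 0) (e 1) (e 1) (e 0), hanti₁ (e 2) (e 0) (e 2) (e 0), hanti₂ (e 0) (e 2) (e 2) (e 0), hanti₁ (e 2) (e 1) (e 2) (e 1), hanti₂ (e 1) (e 2) (e 2) (e 1)]
  have hMcc : R (e 1) (e 2) (e 1) (e 2) = C / 2 := by linarith [hR00, hR11, hR22, hanti₁ (e 0) (e 0) (e 0) (e 0), hanti₁ (e 1) (e 1) (e 1) (e 1), hanti₁ (e 2) (e 2) (e 2) (e 2), hanti₁ (e 1) (e 0) (e 1) (e 0), hanti₂ (e 0) (e 1) (e 1) (e 0), hanti₁ (e 2) (e 0) (e 2) (e 0), hanti₂ (e 0) (e 2) (e 2) (e 0), hanti₁ (e 2) (e 1) (e 2) (e 1), hanti₂ (e 1) (e 2) (e 2) (e 1)]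
  have hMbc : R (e 0) (e 2) (e 1) (e 2) = 0 := by linarith [hR01, hanti₁ (e 0) (e 0) (e 0) (e 1), hanti₂ (e 1) (e 0) (e 1) (e 1), hanti₁ (e 2) (e 0) (e 2) (e 1), hanti₂ (e 0) (e 2) (e 2) (e 1)]
  have hMac : R (e 0) (e 1) (e 1) (e 2) = 0 := by linarith [hR02, hanti₁ (e 0) (e 0) (e 0) (e 2), hanti₂ (e 2) (e 0) (e 2) (e 2), hanti₁ (e 1) (e 0) (e 1) (e 2)]
  have hMab : R (e 0) (e 1) (e 0) (e 2) = 0 := by linarith [hR12, hanti₁ (e 1) (e 1) (e 1) (e 2), hanti₂ (e 2) (e 1) (e 2) (e 2)]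
  have hMba : R (e 0) (e 2) (e 0) (e 1) = 0 := by linarith [hpair (e 0) (e 2) (e 0) (e 1), hMab]
  have hMca : R (e 1) (e 2) (e 0) (e 1) = 0 := by linarith [hpair (e 1) (e 2) (e 0) (e 1), hMac]
  have hMcb : R (e 1) (e 2) (e 0) (e 2) = 0 := by linarith [hpair (e 1) (e 2) (e 0) (e 2), hMbc]
  have key : ∀ i j k l : Fin 3, R (e i) (e j) (e k) (e l) = C / 2 * ((if i = k then (1:ℝ) else 0) * (if j = l then (1:ℝ) else 0) - (if i = l then (1:ℝ) else 0) * (if j = k then (1:ℝ) else 0)) := by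
    intro i j k l
    fin_cases i <;> fin_cases j <;> fin_cases k <;> fin_cases l
    · show R (e 0) (e 0) (e 0) (e 0) = C / 2 * ((1:ℝ) * (1:ℝ) - (1:ℝ) * (1:ℝ))
      linarith [hanti₁ (e 0) (e 0) (e 0) (e 0)]
    · show R (e 0) (e 0) (e 0) (e 1) = C / 2 * ((1:ℝ) * (0:ℝ) - (0:ℝ) * (1:ℝ))
      linarith [hanti₁ (e 0) (e 0) (e 0) (e 1)]
    · show R (e 0) (e 0) (e 0) (e 2) = C / 2 * ((1:ℝ) * (0:ℝ) - (0:ℝ) * (1:ℝ))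
      linarith [hanti₁ (e 0) (e 0) (e 0) (e 2)]
    · show R (e 0) (e 0) (e 1) (e 0) = C / 2 * ((0:ℝ) * (1:ℝ) - (1:ℝ) * (0:ℝ))
      linarith [hanti₁ (e 0) (e 0) (e 1) (e 0)]
    · show R (e 0) (e 0) (e 1) (e 1) = C / 2 * ((0:ℝ) * (0:ℝ) - (0:ℝ) * (0:ℝ))
      linarith [hanti₁ (e 0) (e 0) (e 1) (e 1)]
    · show R (e 0) (e 0) (e 1) (e 2) = C / 2 * ((0:ℝ) * (0:ℝ) - (0:ℝ) * (0:ℝ))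
      linarith [hanti₁ (e 0) (e 0) (e 1) (e 2)]
    · show R (e 0) (e 0) (e 2) (e 0) = C / 2 * ((0:ℝ) * (1:ℝ) - (1:ℝ) * (0:ℝ))
      linarith [hanti₁ (e 0) (e 0) (e 2) (e 0)]
    · show R (e 0) (e 0) (e 2) (e 1) = C / 2 * ((0:ℝ) * (0:ℝ) - (0:ℝ) * (0:ℝ))
      linarith [hanti₁ (e 0) (e 0) (e 2) (e 1)]
    · show R (e 0) (e 0) (e 2) (e 2) = C / 2 * ((0:ℝ) * (0:ℝ) - (0:ℝ) * (0:ℝ))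
      linarith [hanti₁ (e 0) (e 0) (e 2) (e 2)]
    · show R (e 0) (e 1) (e 0) (e 0) = C / 2 * ((1:ℝ) * (0:ℝ) - (1:ℝ) * (0:ℝ))
      linarith [hanti₂ (e 0) (e 1) (e 0) (e 0)]
    · show R (e 0) (e 1) (e 0) (e 1) = C / 2 * ((1:ℝ) * (1:ℝ) - (0:ℝ) * (0:ℝ))
      linarith [hMaa]
    · show R (e 0) (e 1) (e 0) (e 2) = C / 2 * ((1:ℝ) * (0:ℝ) - (0:ℝ) * (0:ℝ))
      linarith [hMab]
    · show R (e 0) (e 1) (e 1) (e 0) = C / 2 * ((0:ℝ) * (0:ℝ) - (1:ℝ) * (1:ℝ))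
      linarith [hanti₂ (e 0) (e 1) (e 1) (e 0), hMaa]
    · show R (e 0) (e 1) (e 1) (e 1) = C / 2 * ((0:ℝ) * (1:ℝ) - (0:ℝ) * (1:ℝ))
      linarith [hanti₂ (e 0) (e 1) (e 1) (e 1)]
    · show R (e 0) (e 1) (e 1) (e 2) = C / 2 * ((0:ℝ) * (0:ℝ) - (0:ℝ) * (1:ℝ))
      linarith [hMac]
    · show R (e 0) (e 1) (e 2) (e 0) = C / 2 * ((0:ℝ) * (0:ℝ) - (1:ℝ) * (0:ℝ))
      linarith [hanti₂ (e 0) (e 1) (e 2) (e 0), hMab]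
    · show R (e 0) (e 1) (e 2) (e 1) = C / 2 * ((0:ℝ) * (1:ℝ) - (0:ℝ) * (0:ℝ))
      linarith [hanti₂ (e 0) (e 1) (e 2) (e 1), hMac]
    · show R (e 0) (e 1) (e 2) (e 2) = C / 2 * ((0:ℝ) * (0:ℝ) - (0:ℝ) * (0:ℝ))
      linarith [hanti₂ (e 0) (e 1) (e 2) (e 2)]
    · show R (e 0) (e 2) (e 0) (e 0) = C / 2 * ((1:ℝ) * (0:ℝ) - (1:ℝ) * (0:ℝ))
      linarith [hanti₂ (e 0) (e 2) (e 0) (e 0)]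
    · show R (e 0) (e 2) (e 0) (e 1) = C / 2 * ((1:ℝ) * (0:ℝ) - (0:ℝ) * (0:ℝ))
      linarith [hMba]
    · show R (e 0) (e 2) (e 0) (e 2) = C / 2 * ((1:ℝ) * (1:ℝ) - (0:ℝ) * (0:ℝ))
      linarith [hMbb]
    · show R (e 0) (e 2) (e 1) (e 0) = C / 2 * ((0:ℝ) * (0:ℝ) - (1:ℝ) * (0:ℝ))
      linarith [hanti₂ (e 0) (e 2) (e 1) (e 0), hMba]
    · show R (e 0) (e 2) (e 1) (e 1) = C / 2 * ((0:ℝ) * (0:ℝ) - (0:ℝ) * (0:ℝ))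
      linarith [hanti₂ (e 0) (e 2) (e 1) (e 1)]
    · show R (e 0) (e 2) (e 1) (e 2) = C / 2 * ((0:ℝ) * (1:ℝ) - (0:ℝ) * (0:ℝ))
      linarith [hMbc]
    · show R (e 0) (e 2) (e 2) (e 0) = C / 2 * ((0:ℝ) * (0:ℝ) - (1:ℝ) * (1:ℝ))
      linarith [hanti₂ (e 0) (e 2) (e 2) (e 0), hMbb]
    · show R (e 0) (e 2) (e 2) (e 1) = C / 2 * ((0:ℝ) * (0:ℝ) - (0:ℝ) * (1:ℝ))
      linarith [hanti₂ (e 0) (e 2) (e 2) (e 1), hMbc]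
    · show R (e 0) (e 2) (e 2) (e 2) = C / 2 * ((0:ℝ) * (1:ℝ) - (0:ℝ) * (1:ℝ))
      linarith [hanti₂ (e 0) (e 2) (e 2) (e 2)]
    · show R (e 1) (e 0) (e 0) (e 0) = C / 2 * ((0:ℝ) * (1:ℝ) - (0:ℝ) * (1:ℝ))
      linarith [hanti₂ (e 1) (e 0) (e 0) (e 0)]
    · show R (e 1) (e 0) (e 0) (e 1) = C / 2 * ((0:ℝ) * (0:ℝ) - (1:ℝ) * (1:ℝ))
      linarith [hanti₁ (e 1) (e 0) (e 0) (e 1), hMaa]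
    · show R (e 1) (e 0) (e 0) (e 2) = C / 2 * ((0:ℝ) * (0:ℝ) - (0:ℝ) * (1:ℝ))
      linarith [hanti₁ (e 1) (e 0) (e 0) (e 2), hMab]
    · show R (e 1) (e 0) (e 1) (e 0) = C / 2 * ((1:ℝ) * (1:ℝ) - (0:ℝ) * (0:ℝ))
      linarith [hanti₁ (e 1) (e 0) (e 1) (e 0), hanti₂ (e 0) (e 1) (e 1) (e 0), hMaa]
    · show R (e 1) (e 0) (e 1) (e 1) = C / 2 * ((1:ℝ) * (0:ℝ) - (1:ℝ) * (0:ℝ))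
      linarith [hanti₂ (e 1) (e 0) (e 1) (e 1)]
    · show R (e 1) (e 0) (e 1) (e 2) = C / 2 * ((1:ℝ) * (0:ℝ) - (0:ℝ) * (0:ℝ))
      linarith [hanti₁ (e 1) (e 0) (e 1) (e 2), hMac]
    · show R (e 1) (e 0) (e 2) (e 0) = C / 2 * ((0:ℝ) * (1:ℝ) - (0:ℝ) * (0:ℝ))
      linarith [hanti₁ (e 1) (e 0) (e 2) (e 0), hanti₂ (e 0) (e 1) (e 2) (e 0), hMab]
    · show R (e 1) (e 0) (e 2) (e 1) = C / 2 * ((0:ℝ) * (0:ℝ) - (1:ℝ) * (0:ℝ))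
      linarith [hanti₁ (e 1) (e 0) (e 2) (e 1), hanti₂ (e 0) (e 1) (e 2) (e 1), hMac]
    · show R (e 1) (e 0) (e 2) (e 2) = C / 2 * ((0:ℝ) * (0:ℝ) - (0:ℝ) * (0:ℝ))
      linarith [hanti₂ (e 1) (e 0) (e 2) (e 2)]
    · show R (e 1) (e 1) (e 0) (e 0) = C / 2 * ((0:ℝ) * (0:ℝ) - (0:ℝ) * (0:ℝ))
      linarith [hanti₁ (e 1) (e 1) (e 0) (e 0)]
    · show R (e 1) (e 1) (e 0) (e 1) = C / 2 * ((0:ℝ) * (1:ℝ) - (1:ℝ) * (0:ℝ))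
      linarith [hanti₁ (e 1) (e 1) (e 0) (e 1)]
    · show R (e 1) (e 1) (e 0) (e 2) = C / 2 * ((0:ℝ) * (0:ℝ) - (0:ℝ) * (0:ℝ))
      linarith [hanti₁ (e 1) (e 1) (e 0) (e 2)]
    · show R (e 1) (e 1) (e 1) (e 0) = C / 2 * ((1:ℝ) * (0:ℝ) - (0:ℝ) * (1:ℝ))
      linarith [hanti₁ (e 1) (e 1) (e 1) (e 0)]
    · show R (e 1) (e 1) (e 1) (e 1) = C / 2 * ((1:ℝ) * (1:ℝ) - (1:ℝ) * (1:ℝ))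
      linarith [hanti₁ (e 1) (e 1) (e 1) (e 1)]
    · show R (e 1) (e 1) (e 1) (e 2) = C / 2 * ((1:ℝ) * (0:ℝ) - (0:ℝ) * (1:ℝ))
      linarith [hanti₁ (e 1) (e 1) (e 1) (e 2)]
    · show R (e 1) (e 1) (e 2) (e 0) = C / 2 * ((0:ℝ) * (0:ℝ) - (0:ℝ) * (0:ℝ))
      linarith [hanti₁ (e 1) (e 1) (e 2) (e 0)]
    · show R (e 1) (e 1) (e 2) (e 1) = C / 2 * ((0:ℝ) * (1:ℝ) - (1:ℝ) * (0:ℝ))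
      linarith [hanti₁ (e 1) (e 1) (e 2) (e 1)]
    · show R (e 1) (e 1) (e 2) (e 2) = C / 2 * ((0:ℝ) * (0:ℝ) - (0:ℝ) * (0:ℝ))
      linarith [hanti₁ (e 1) (e 1) (e 2) (e 2)]
    · show R (e 1) (e 2) (e 0) (e 0) = C / 2 * ((0:ℝ) * (0:ℝ) - (0:ℝ) * (0:ℝ))
      linarith [hanti₂ (e 1) (e 2) (e 0) (e 0)]
    · show R (e 1) (e 2) (e 0) (e 1) = C / 2 * ((0:ℝ) * (0:ℝ) - (1:ℝ) * (0:ℝ))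
      linarith [hMca]
    · show R (e 1) (e 2) (e 0) (e 2) = C / 2 * ((0:ℝ) * (1:ℝ) - (0:ℝ) * (0:ℝ))
      linarith [hMcb]
    · show R (e 1) (e 2) (e 1) (e 0) = C / 2 * ((1:ℝ) * (0:ℝ) - (0:ℝ) * (0:ℝ))
      linarith [hanti₂ (e 1) (e 2) (e 1) (e 0), hMca]
    · show R (e 1) (e 2) (e 1) (e 1) = C / 2 * ((1:ℝ) * (0:ℝ) - (1:ℝ) * (0:ℝ))
      linarith [hanti₂ (e 1) (e 2) (e 1) (e 1)]
    · show R (e 1) (e 2) (e 1) (e 2) = C / 2 * ((1:ℝ) * (1:ℝ) - (0:ℝ) * (0:ℝ))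
      linarith [hMcc]
    · show R (e 1) (e 2) (e 2) (e 0) = C / 2 * ((0:ℝ) * (0:ℝ) - (0:ℝ) * (1:ℝ))
      linarith [hanti₂ (e 1) (e 2) (e 2) (e 0), hMcb]
    · show R (e 1) (e 2) (e 2) (e 1) = C / 2 * ((0:ℝ) * (0:ℝ) - (1:ℝ) * (1:ℝ))
      linarith [hanti₂ (e 1) (e 2) (e 2) (e 1), hMcc]
    · show R (e 1) (e 2) (e 2) (e 2) = C / 2 * ((0:ℝ) * (1:ℝ) - (0:ℝ) * (1:ℝ))
      linarith [hanti₂ (e 1) (e 2) (e 2) (e 2)]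
    · show R (e 2) (e 0) (e 0) (e 0) = C / 2 * ((0:ℝ) * (1:ℝ) - (0:ℝ) * (1:ℝ))
      linarith [hanti₂ (e 2) (e 0) (e 0) (e 0)]
    · show R (e 2) (e 0) (e 0) (e 1) = C / 2 * ((0:ℝ) * (0:ℝ) - (0:ℝ) * (1:ℝ))
      linarith [hanti₁ (e 2) (e 0) (e 0) (e 1), hMba]
    · show R (e 2) (e 0) (e 0) (e 2) = C / 2 * ((0:ℝ) * (0:ℝ) - (1:ℝ) * (1:ℝ))
      linarith [hanti₁ (e 2) (e 0) (e 0) (e 2), hMbb]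
    · show R (e 2) (e 0) (e 1) (e 0) = C / 2 * ((0:ℝ) * (1:ℝ) - (0:ℝ) * (0:ℝ))
      linarith [hanti₁ (e 2) (e 0) (e 1) (e 0), hanti₂ (e 0) (e 2) (e 1) (e 0), hMba]
    · show R (e 2) (e 0) (e 1) (e 1) = C / 2 * ((0:ℝ) * (0:ℝ) - (0:ℝ) * (0:ℝ))
      linarith [hanti₂ (e 2) (e 0) (e 1) (e 1)]
    · show R (e 2) (e 0) (e 1) (e 2) = C / 2 * ((0:ℝ) * (0:ℝ) - (1:ℝ) * (0:ℝ))
      linarith [hanti₁ (e 2) (e 0) (e 1) (e 2), hMbc]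
    · show R (e 2) (e 0) (e 2) (e 0) = C / 2 * ((1:ℝ) * (1:ℝ) - (0:ℝ) * (0:ℝ))
      linarith [hanti₁ (e 2) (e 0) (e 2) (e 0), hanti₂ (e 0) (e 2) (e 2) (e 0), hMbb]
    · show R (e 2) (e 0) (e 2) (e 1) = C / 2 * ((1:ℝ) * (0:ℝ) - (0:ℝ) * (0:ℝ))
      linarith [hanti₁ (e 2) (e 0) (e 2) (e 1), hanti₂ (e 0) (e 2) (e 2) (e 1), hMbc]
    · show R (e 2) (e 0) (e 2) (e 2) = C / 2 * ((1:ℝ) * (0:ℝ) - (1:ℝ) * (0:ℝ))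
      linarith [hanti₂ (e 2) (e 0) (e 2) (e 2)]
    · show R (e 2) (e 1) (e 0) (e 0) = C / 2 * ((0:ℝ) * (0:ℝ) - (0:ℝ) * (0:ℝ))
      linarith [hanti₂ (e 2) (e 1) (e 0) (e 0)]
    · show R (e 2) (e 1) (e 0) (e 1) = C / 2 * ((0:ℝ) * (1:ℝ) - (0:ℝ) * (0:ℝ))
      linarith [hanti₁ (e 2) (e 1) (e 0) (e 1), hMca]
    · show R (e 2) (e 1) (e 0) (e 2) = C / 2 * ((0:ℝ) * (0:ℝ) - (1:ℝ) * (0:ℝ))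
      linarith [hanti₁ (e 2) (e 1) (e 0) (e 2), hMcb]
    · show R (e 2) (e 1) (e 1) (e 0) = C / 2 * ((0:ℝ) * (0:ℝ) - (0:ℝ) * (1:ℝ))
      linarith [hanti₁ (e 2) (e 1) (e 1) (e 0), hanti₂ (e 1) (e 2) (e 1) (e 0), hMca]
    · show R (e 2) (e 1) (e 1) (e 1) = C / 2 * ((0:ℝ) * (1:ℝ) - (0:ℝ) * (1:ℝ))
      linarith [hanti₂ (e 2) (e 1) (e 1) (e 1)]
    · show R (e 2) (e 1) (e 1) (e 2) = C / 2 * ((0:ℝ) * (0:ℝ) - (1:ℝ) * (1:ℝ))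
      linarith [hanti₁ (e 2) (e 1) (e 1) (e 2), hMcc]
    · show R (e 2) (e 1) (e 2) (e 0) = C / 2 * ((1:ℝ) * (0:ℝ) - (0:ℝ) * (0:ℝ))
      linarith [hanti₁ (e 2) (e 1) (e 2) (e 0), hanti₂ (e 1) (e 2) (e 2) (e 0), hMcb]
    · show R (e 2) (e 1) (e 2) (e 1) = C / 2 * ((1:ℝ) * (1:ℝ) - (0:ℝ) * (0:ℝ))
      linarith [hanti₁ (e 2) (e 1) (e 2) (e 1), hanti₂ (e 1) (e 2) (e 2) (e 1), hMcc]
    · show R (e 2) (e 1) (e 2) (e 2) = C / 2 * ((1:ℝ) * (0:ℝ) - (1:ℝ) * (0:ℝ))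
      linarith [hanti₂ (e 2) (e 1) (e 2) (e 2)]
    · show R (e 2) (e 2) (e 0) (e 0) = C / 2 * ((0:ℝ) * (0:ℝ) - (0:ℝ) * (0:ℝ))
      linarith [hanti₁ (e 2) (e 2) (e 0) (e 0)]
    · show R (e 2) (e 2) (e 0) (e 1) = C / 2 * ((0:ℝ) * (0:ℝ) - (0:ℝ) * (0:ℝ))
      linarith [hanti₁ (e 2) (e 2) (e 0) (e 1)]
    · show R (e 2) (e 2) (e 0) (e 2) = C / 2 * ((0:ℝ) * (1:ℝ) - (1:ℝ) * (0:ℝ))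
      linarith [hanti₁ (e 2) (e 2) (e 0) (e 2)]
    · show R (e 2) (e 2) (e 1) (e 0) = C / 2 * ((0:ℝ) * (0:ℝ) - (0:ℝ) * (0:ℝ))
      linarith [hanti₁ (e 2) (e 2) (e 1) (e 0)]
    · show R (e 2) (e 2) (e 1) (e 1) = C / 2 * ((0:ℝ) * (0:ℝ) - (0:ℝ) * (0:ℝ))
      linarith [hanti₁ (e 2) (e 2) (e 1) (e 1)]
    · show R (e 2) (e 2) (e 1) (e 2) = C / 2 * ((0:ℝ) * (1:ℝ) - (1:ℝ) * (0:ℝ))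
      linarith [hanti₁ (e 2) (e 2) (e 1) (e 2)]
    · show R (e 2) (e 2) (e 2) (e 0) = C / 2 * ((1:ℝ) * (0:ℝ) - (0:ℝ) * (1:ℝ))
      linarith [hanti₁ (e 2) (e 2) (e 2) (e 0)]
    · show R (e 2) (e 2) (e 2) (e 1) = C / 2 * ((1:ℝ) * (0:ℝ) - (0:ℝ) * (1:ℝ))
      linarith [hanti₁ (e 2) (e 2) (e 2) (e 1)]
    · show R (e 2) (e 2) (e 2) (e 2) = C / 2 * ((1:ℝ) * (1:ℝ) - (1:ℝ) * (1:ℝ))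
      linarith [hanti₁ (e 2) (e 2) (e 2) (e 2)]

  intro x y z w
  rw [← e.sum_repr x, ← e.sum_repr y, ← e.sum_repr z, ← e.sum_repr w]
  simp only [map_sum, map_smul, LinearMap.coe_sum, Finset.sum_apply, LinearMap.smul_apply,
    smul_eq_mul, inner_sum, sum_inner, real_inner_smul_left, real_inner_smul_right]
  simp only [key, hON]
  simp only [Fin.sum_univ_three]
  simp only [Fin.reduceEq, reduceIte]
  norm_num
  ring
end

section
/- Let V be a real inner product space of dimension 3 with inner product g, and let R be an algebraic curvature tensor on V (a multilinear map V × V × V × V → ℝ that is antisymmetric in its first two and last two arguments, symmetric under exchange of the first pair with the second pair, and satisfies the first Bianchi identity) whose Ricci contraction satisfies Σᵢ R(eᵢ, y, eᵢ, w) = C·g(y,w) for all y,w ∈ V, for some real constant C and an orthonormal basis (eᵢ). Then all sectional curvatures of R are equal to C/2: for every pair of linearly independent vectors u, v ∈ V, R(u,v,u,v) / (g(u,u)·g(v,v) − g(u,v)²) = C/2. -/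
set_option maxHeartbeats 2000000 in
theorem aux_curv3 (S : Fin 3 → Fin 3 → Fin 3 → Fin 3 → ℝ) (C : ℝ)
    (h1 : ∀ i j k l, S i j k l = - S j i k l)
    (h2 : ∀ i j k l, S i j k l = - S i j l k)
    (hp : ∀ i j k l, S i j k l = S k l i j)
    (hric : ∀ j l, S 0 j 0 l + S 1 j 1 l + S 2 j 2 l = C * (if j = l then (1:ℝ) else 0)) :
    ∀ i j k l, S i j k l
      = C/2 * ((if i = k then (1:ℝ) else 0) * (if j = l then (1:ℝ) else 0)
             - (if i = l then (1:ℝ) else 0) * (if j = k then (1:ℝ) else 0)) := by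
  have lz1 : ∀ i k l, S i i k l = 0 := fun i k l => by have := h1 i i k l; linarith
  have lz2 : ∀ i j k, S i j k k = 0 := fun i j k => by have := h2 i j k k; linarith
  have q00 := hric 0 0; have q01 := hric 0 1; have q02 := hric 0 2
  have q10 := hric 1 0; have q11 := hric 1 1; have q12 := hric 1 2
  have q20 := hric 2 0; have q21 := hric 2 1; have q22 := hric 2 2
  norm_num [Fin.ext_iff, lz1, lz2] at q00 q01 q02 q10 q11 q12 q20 q21 q22
  -- diagonal sectional values
  have e1010 : S 1 0 1 0 = S 0 1 0 1 := by have a := h1 1 0 1 0; have b := h2 0 1 1 0; linarith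
  have e2020 : S 2 0 2 0 = S 0 2 0 2 := by have a := h1 2 0 2 0; have b := h2 0 2 2 0; linarith
  have e2121 : S 2 1 2 1 = S 1 2 1 2 := by have a := h1 2 1 2 1; have b := h2 1 2 2 1; linarith
  have z1 : S 0 1 0 1 = C/2 := by rw [e1010, e2020] at q00; rw [e2121] at q11; linarith
  have z2 : S 0 2 0 2 = C/2 := by rw [e1010, e2020] at q00; rw [e2121] at q11; linarith
  have z3 : S 1 2 1 2 = C/2 := by rw [e1010, e2020] at q00; rw [e2121] at q11; linarith
  have w1 : S 2 0 2 1 = 0 := q01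
  have w2 : S 1 0 1 2 = 0 := q02
  have w3 : S 0 1 0 2 = 0 := q12
  have tri : ∀ m : Fin 3, m = 0 ∨ m = 1 ∨ m = 2 := by decide
  intro i j k l
  rcases tri i with rfl|rfl|rfl <;> rcases tri j with rfl|rfl|rfl <;>
    rcases tri k with rfl|rfl|rfl <;> rcases tri l with rfl|rfl|rfl <;>
    norm_num [Fin.ext_iff, lz1, lz2] <;>
    linarith [h1 0 1 0 1,
        h2 0 1 0 1,
        hp 0 1 0 1,
        h1 0 1 0 2,
        h2 0 1 0 2,
        hp 0 1 0 2,
        h1 0 1 1 0,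
        h2 0 1 1 0,
        hp 0 1 1 0,
        h1 0 1 1 2,
        h2 0 1 1 2,
        hp 0 1 1 2,
        h1 0 1 2 0,
        h2 0 1 2 0,
        hp 0 1 2 0,
        h1 0 1 2 1,
        h2 0 1 2 1,
        hp 0 1 2 1,
        h1 0 2 0 1,
        h2 0 2 0 1,
        hp 0 2 0 1,
        h1 0 2 0 2,
        h2 0 2 0 2,
        hp 0 2 0 2,
        h1 0 2 1 0,
        h2 0 2 1 0,
        hp 0 2 1 0,
        h1 0 2 1 2,
        h2 0 2 1 2,
        hp 0 2 1 2,
        h1 0 2 2 0,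
        h2 0 2 2 0,
        hp 0 2 2 0,
        h1 0 2 2 1,
        h2 0 2 2 1,
        hp 0 2 2 1,
        h1 1 0 0 1,
        h2 1 0 0 1,
        hp 1 0 0 1,
        h1 1 0 0 2,
        h2 1 0 0 2,
        hp 1 0 0 2,
        h1 1 0 1 0,
        h2 1 0 1 0,
        hp 1 0 1 0,
        h1 1 0 1 2,
        h2 1 0 1 2,
        hp 1 0 1 2,
        h1 1 0 2 0,
        h2 1 0 2 0,
        hp 1 0 2 0,
        h1 1 0 2 1,
        h2 1 0 2 1,
        hp 1 0 2 1,
        h1 1 2 0 1,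
        h2 1 2 0 1,
        hp 1 2 0 1,
        h1 1 2 0 2,
        h2 1 2 0 2,
        hp 1 2 0 2,
        h1 1 2 1 0,
        h2 1 2 1 0,
        hp 1 2 1 0,
        h1 1 2 1 2,
        h2 1 2 1 2,
        hp 1 2 1 2,
        h1 1 2 2 0,
        h2 1 2 2 0,
        hp 1 2 2 0,
        h1 1 2 2 1,
        h2 1 2 2 1,
        hp 1 2 2 1,
        h1 2 0 0 1,
        h2 2 0 0 1,
        hp 2 0 0 1,
        h1 2 0 0 2,
        h2 2 0 0 2,
        hp 2 0 0 2,
        h1 2 0 1 0,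
        h2 2 0 1 0,
        hp 2 0 1 0,
        h1 2 0 1 2,
        h2 2 0 1 2,
        hp 2 0 1 2,
        h1 2 0 2 0,
        h2 2 0 2 0,
        hp 2 0 2 0,
        h1 2 0 2 1,
        h2 2 0 2 1,
        hp 2 0 2 1,
        h1 2 1 0 1,
        h2 2 1 0 1,
        hp 2 1 0 1,
        h1 2 1 0 2,
        h2 2 1 0 2,
        hp 2 1 0 2,
        h1 2 1 1 0,
        h2 2 1 1 0,
        hp 2 1 1 0,
        h1 2 1 1 2,
        h2 2 1 1 2,
        hp 2 1 1 2,
        h1 2 1 2 0,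
        h2 2 1 2 0,
        hp 2 1 2 0,
        h1 2 1 2 1,
        h2 2 1 2 1,
        hp 2 1 2 1,
        z1,
        z2,
        z3,
        w1,
        w2,
        w3]

open scoped RealInnerProductSpace

set_option maxHeartbeats 4000000 in
/-- In 3 dimensions, an algebraic curvature tensor whose Ricci contraction satisfies
`Ric = C·g` has all sectional curvatures equal to `C/2`. -/
theorem sectional_curvature_const_of_ricci_proportional_dim3
    (V : Type*) [NormedAddCommGroup V] [InnerProductSpace ℝ V]
    (hdim : Module.finrank ℝ V = 3)
    (e : OrthonormalBasis (Fin 3) ℝ V)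
    (R : V →ₗ[ℝ] V →ₗ[ℝ] V →ₗ[ℝ] V →ₗ[ℝ] ℝ)
    (hanti₁ : ∀ x y z w : V, R x y z w = - R y x z w)
    (hanti₂ : ∀ x y z w : V, R x y z w = - R x y w z)
    (hpair : ∀ x y z w : V, R x y z w = R z w x y)
    (hbianchi : ∀ x y z w : V, R x y z w + R x z w y + R x w y z = 0)
    (C : ℝ)
    (hRic : ∀ y w : V, ∑ i, R (e i) y (e i) w = C * ⟪y, w⟫) :
    ∀ u v : V, LinearIndependent ℝ ![u, v] →
      R u v u v / (⟪u, u⟫ * ⟪v, v⟫ - ⟪u, v⟫ ^ 2) = C / 2 := by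
  classical
  have horth : ∀ i j : Fin 3, ⟪e i, e j⟫ = if i = j then (1:ℝ) else 0 :=
    orthonormal_iff_ite.mp e.orthonormal
  have hric : ∀ j l : Fin 3,
      R (e 0) (e j) (e 0) (e l) + R (e 1) (e j) (e 1) (e l) + R (e 2) (e j) (e 2) (e l)
        = C * (if j = l then (1:ℝ) else 0) := by
    intro j l
    have h := hRic (e j) (e l)
    rw [Fin.sum_univ_three] at h
    rw [horth] at h
    linarith
  have hS : ∀ i j k l : Fin 3, R (e i) (e j) (e k) (e l)
      = C/2 * ((if i = k then (1:ℝ) else 0) * (if j = l then (1:ℝ) else 0)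
             - (if i = l then (1:ℝ) else 0) * (if j = k then (1:ℝ) else 0)) :=
    aux_curv3 (fun i j k l => R (e i) (e j) (e k) (e l)) C
      (fun i j k l => hanti₁ (e i) (e j) (e k) (e l))
      (fun i j k l => hanti₂ (e i) (e j) (e k) (e l))
      (fun i j k l => hpair (e i) (e j) (e k) (e l))
      hric
  have key : ∀ u v : V, R u v u v = C/2 * (⟪u, u⟫ * ⟪v, v⟫ - ⟪u, v⟫ ^ 2) := by
    intro u v
    obtain ⟨a, ha⟩ : ∃ a : Fin 3 → ℝ, u = ∑ i, a i • e i :=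
      ⟨fun i => e.repr u i, (e.sum_repr u).symm⟩
    obtain ⟨b, hb⟩ : ∃ b : Fin 3 → ℝ, v = ∑ i, b i • e i :=
      ⟨fun i => e.repr v i, (e.sum_repr v).symm⟩
    rw [ha, hb]
    simp only [Fin.sum_univ_three, map_add, map_smul, LinearMap.add_apply,
      LinearMap.smul_apply, smul_eq_mul, inner_add_left, inner_add_right,
      real_inner_smul_left, real_inner_smul_right, hS, horth]
    norm_num [Fin.ext_iff]
    ring
  intro u v hli
  rw [linearIndependent_fin2] at hli
  have hv0 : v ≠ 0 := by simpa using hli.1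
  have hvvne : ⟪v, v⟫ ≠ 0 := fun hh => hv0 (inner_self_eq_zero.mp hh)
  have hD : ⟪u, u⟫ * ⟪v, v⟫ - ⟪u, v⟫ ^ 2 ≠ 0 := by
    intro h
    have hz : ⟪⟪v, v⟫ • u - ⟪u, v⟫ • v, ⟪v, v⟫ • u - ⟪u, v⟫ • v⟫ = 0 := by
      simp only [inner_sub_left, inner_sub_right, real_inner_smul_left,
        real_inner_smul_right]
      have hc : ⟪v, u⟫ = ⟪u, v⟫ := (real_inner_comm v u).symm
      linear_combination ⟪v, v⟫ * h - ⟪v, v⟫ * ⟪u, v⟫ * hc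
    have hw : (⟪v, v⟫ : ℝ) • u = (⟪u, v⟫ : ℝ) • v := by
      rw [← sub_eq_zero]
      exact inner_self_eq_zero.mp hz
    have huv : u = (⟪u, v⟫ / ⟪v, v⟫) • v := by
      rw [div_eq_mul_inv, mul_comm, mul_smul, ← hw, inv_smul_smul₀ hvvne]
    exact hli.2 _ huv.symm
  rw [key u v, mul_div_assoc, div_self hD, mul_one]
end

section
/- Let T³ denote the flat 3-torus, i.e. the quotient of Euclidean 3-space E = EuclideanSpace ℝ (Fin 3) by the closed additive subgroup L = {x ∈ E | ∀ i, x i ∈ ℤ} of integer lattice points, equipped with the quotient metric dist([x],[y]) = inf_{v ∈ L} ‖x − y − v‖, and let Isom(T³) denote the group of bijective distance-preserving maps of T³ to itself (isometry equivalences of T³, with composition). Let SO(3) denote the group of 3×3 real orthogonal matrices of determinant 1. Then there is no injective group homomorphism from SO(3) into Isom(T³). In particular, the flat 3-torus admits no faithful action of the rotation group by isometries: it is locally isotropic but not globally isotropic. -/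
noncomputable section

/-- The integer lattice in Euclidean 3-space: the additive subgroup of vectors all of
whose coordinates are integers. -/
def intLattice : AddSubgroup (EuclideanSpace ℝ (Fin 3)) where
  carrier := {x : EuclideanSpace ℝ (Fin 3) | ∀ i, ∃ n : ℤ, x i = n}
  zero_mem' := fun i => ⟨0, by simp⟩
  add_mem' := by
    intro x y hx hy i
    obtain ⟨n, hn⟩ := hx i
    obtain ⟨m, hm⟩ := hy i
    exact ⟨n + m, by push_cast; rw [PiLp.add_apply, hn, hm]⟩
  neg_mem' := by
    intro x hx i
    obtain ⟨n, hn⟩ := hx i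
    exact ⟨-n, by push_cast; rw [PiLp.neg_apply, hn]⟩

/-- The integer lattice is a closed subset of Euclidean 3-space, so that the quotient
(the flat 3-torus) inherits a genuine metric, `dist [x] [y] = inf_{v ∈ L} ‖x - y - v‖`. -/
instance intLattice_isClosed : IsClosed (intLattice : Set (EuclideanSpace ℝ (Fin 3))) := by
  have h : (intLattice : Set (EuclideanSpace ℝ (Fin 3))) =
      ⋂ i, (fun x : EuclideanSpace ℝ (Fin 3) => x i) ⁻¹' (Set.range ((↑) : ℤ → ℝ)) := by
    ext x
    simp only [Set.mem_iInter, Set.mem_preimage, Set.mem_range]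
    constructor
    · intro hx i; obtain ⟨n, hn⟩ := hx i; exact ⟨n, hn.symm⟩
    · intro hx i; obtain ⟨n, hn⟩ := hx i; exact ⟨n, hn.symm⟩
  rw [h]
  exact isClosed_iInter fun i =>
    Int.isClosedEmbedding_coe_real.isClosed_range.preimage
      (EuclideanSpace.proj (𝕜 := ℝ) i).continuous

/-- The flat 3-torus: the quotient of Euclidean 3-space by the integer lattice, with the
quotient metric `dist [x] [y] = inf_{v ∈ L} ‖x - y - v‖` (induced by the quotient norm). -/
abbrev Torus3 : Type := EuclideanSpace ℝ (Fin 3) ⧸ intLattice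

namespace TorusProof

/-- distance from a real number to the nearest integer -/
def δ (x : ℝ) : ℝ := |x - round x|

lemma δ_nonneg (x : ℝ) : 0 ≤ δ x := abs_nonneg _

lemma δ_le_half (x : ℝ) : δ x ≤ 1/2 := by
  simpa [δ] using abs_sub_round x

private lemma cast_one_le (x : ℝ) (n : ℤ) (h : round x ≠ n) : (1:ℝ) ≤ |(round x : ℝ) - n| := by
  have h0 : (1:ℤ) ≤ |round x - n| := Int.one_le_abs (sub_ne_zero.mpr h)
  calc (1:ℝ) = ((1:ℤ):ℝ) := by norm_num
    _ ≤ (|round x - n| : ℤ) := by exact_mod_cast h0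
    _ = |(round x : ℝ) - n| := by push_cast; ring_nf

lemma δ_le (x : ℝ) (n : ℤ) : δ x ≤ |x - n| := by
  rcases eq_or_ne (round x) n with h | h
  · simp [δ, h]
  · have h1 := cast_one_le x n h
    have h2 : |(round x:ℝ) - n| ≤ |(round x:ℝ) - x| + |x - n| := abs_sub_le _ _ _
    have h3 : |(round x:ℝ) - x| = δ x := by rw [abs_sub_comm]; rfl
    have := δ_le_half x
    simp only [δ] at *
    linarith

lemma δ_eq_of (x : ℝ) (n : ℤ) (h : |x - n| ≤ 1/2) : δ x = |x - n| := by
  refine le_antisymm (δ_le x n) ?_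
  rcases eq_or_ne (round x) n with h' | h'
  · simp [δ, h']
  · have h1 := cast_one_le x n h'
    have h2 : |(round x:ℝ) - n| ≤ |(round x:ℝ) - x| + |x - n| := abs_sub_le _ _ _
    have h3 : |(round x:ℝ) - x| = δ x := by rw [abs_sub_comm]; rfl
    simp only [δ] at *
    linarith

lemma δ_int_sub (x : ℝ) (n : ℤ) : δ (x - n) = δ x := by
  have h : round (x - n) = round x - n := by
    simpa using round_add_int x (-n)
  simp only [δ, h]
  push_cast
  ring_nf

lemma δ_neg (x : ℝ) : δ (-x) = δ x := by
  have h : |(-x) - ((-(round x) : ℤ) : ℝ)| ≤ 1/2 := by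
    push_cast
    rw [show -x - -(round x : ℝ) = -(x - round x) by ring, abs_neg]
    exact δ_le_half x
  rw [δ_eq_of (-x) (-(round x)) h]
  push_cast
  rw [show -x - -(round x : ℝ) = -(x - round x) by ring, abs_neg]
  rfl

/-- if two reals have the same distance to ℤ, they agree up to sign mod ℤ -/
lemma δ_eq_δ (x y : ℝ) (h : δ x = δ y) :
    (∃ n : ℤ, x - y = n) ∨ (∃ n : ℤ, x + y = n) := by
  have habs : |x - round x| = |y - round y| := h
  rcases abs_eq_abs.mp habs with h' | h'
  · exact Or.inl ⟨round x - round y, by push_cast; linarith⟩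
  · exact Or.inr ⟨round x + round y, by push_cast; linarith⟩

lemma δ_sub_half (x : ℝ) : δ (x - 1/2) = 1/2 - δ x := by
  have hr := abs_sub_round x
  rcases le_or_gt (round x : ℝ) x with h | h
  · have hδ : δ x = x - round x := by
      rw [δ, abs_of_nonneg (by linarith)]
    have h2 : |x - 1/2 - (round x : ℝ)| ≤ 1/2 := by
      rw [abs_of_nonneg (by linarith)] at hr
      rw [abs_of_nonpos (by linarith)]
      linarith
    rw [abs_of_nonneg (by linarith)] at hr
    rw [δ_eq_of _ (round x) h2, abs_of_nonpos (by linarith), hδ]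
    ring
  · have hδ : δ x = (round x : ℝ) - x := by
      rw [δ, abs_of_neg (by linarith)]; ring
    have h2 : |x - 1/2 - ((round x - 1 : ℤ) : ℝ)| ≤ 1/2 := by
      rw [abs_of_nonneg]
      · push_cast; rw [abs_of_neg (by linarith)] at hr; linarith
      · push_cast; rw [abs_of_neg (by linarith)] at hr; linarith
    rw [δ_eq_of _ (round x - 1) h2, abs_of_nonneg, hδ]
    · push_cast; ring
    · push_cast; rw [abs_of_neg (by linarith)] at hr; linarith

/-- resolving lemma on the circle: δ values at x and x-1/4 determine x mod ℤ -/
lemma δ_quarter (x y : ℝ) (h1 : δ x = δ y) (h4 : δ (x - 1/4) = δ (y - 1/4)) :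
    ∃ n : ℤ, x - y = n := by
  rcases δ_eq_δ _ _ h1 with h | ⟨n, hn⟩
  · exact h
  rcases δ_eq_δ _ _ h4 with ⟨m, hm⟩ | ⟨m, hm⟩
  · exact ⟨m, by linarith⟩
  · exfalso
    have : ((n - m : ℤ) : ℝ) = 1/2 := by push_cast; linarith
    have h2 : (2 : ℝ) * ((n - m : ℤ) : ℝ) = 1 := by rw [this]; norm_num
    have : ((2 * (n - m) : ℤ) : ℝ) = ((1:ℤ):ℝ) := by push_cast; push_cast at h2; linarith
    have := Int.cast_injective this
    omega

lemma δ_zero : δ 0 = 0 := by simp [δ]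

lemma eq_int_of_δ_eq_zero (x : ℝ) (h : δ x = 0) : ∃ n : ℤ, x = n :=
  ⟨round x, by have := abs_eq_zero.mp h; linarith⟩

lemma eq_of_δ_eq_half (x : ℝ) (h : δ x = 1/2) : ∃ n : ℤ, x = n + 1/2 := by
  rcases abs_eq (by norm_num : (0:ℝ) ≤ 1/2) |>.mp h with h' | h'
  · exact ⟨round x, by linarith⟩
  · exact ⟨round x - 1, by push_cast; linarith⟩

lemma eq_of_δ_eq_quarter (x : ℝ) (h : δ x = 1/4) :
    (∃ n : ℤ, x = n + 1/4) ∨ (∃ n : ℤ, x = n - 1/4) := by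
  rcases abs_eq (by norm_num : (0:ℝ) ≤ 1/4) |>.mp h with h' | h'
  · exact Or.inl ⟨round x, by linarith⟩
  · exact Or.inr ⟨round x, by linarith⟩

-- numeric values
lemma δ_half : δ (1/2) = 1/2 := by
  rw [δ_eq_of (1/2) 0 (by rw [show (1:ℝ)/2 - (0:ℤ) = 1/2 by norm_num, abs_of_nonneg] <;> norm_num)]; norm_num

lemma δ_quarter_val : δ (1/4) = 1/4 := by
  rw [δ_eq_of (1/4) 0 (by rw [show (1:ℝ)/4 - (0:ℤ) = 1/4 by norm_num, abs_of_nonneg] <;> norm_num)]; norm_num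

lemma δ_neg_quarter : δ (-(1/4)) = 1/4 := by rw [δ_neg]; exact δ_quarter_val

lemma δ_neg_half : δ (-(1/2)) = 1/2 := by rw [δ_neg]; exact δ_half

end TorusProof

-- ======================= Torus setup ==========================
namespace TorusProof

abbrev E3 := EuclideanSpace ℝ (Fin 3)

def tov (x : Fin 3 → ℝ) : E3 := (WithLp.equiv 2 _).symm x

@[simp] lemma tov_apply (x : Fin 3 → ℝ) (j : Fin 3) : tov x j = x j := rfl

abbrev T3 := Torus3

def tomk (x : Fin 3 → ℝ) : T3 := (tov x : T3)

lemma norm_mk_eq (z : E3) :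
    ‖(z : T3)‖ = Real.sqrt (∑ j, δ (z j) ^ 2) := by
  set w : E3 := tov (fun j => z j - round (z j)) with hw
  have hmem : z - w ∈ intLattice := by
    intro j
    exact ⟨round (z j), by simp [hw, PiLp.sub_apply]⟩
  have hzw : (z : T3) = (w : T3) := (QuotientAddGroup.eq_iff_sub_mem).mpr hmem
  have hwnorm : ‖w‖ = Real.sqrt (∑ j, δ (z j) ^ 2) := by
    rw [EuclideanSpace.norm_eq]
    have : ∀ j, ‖w j‖ ^ 2 = δ (z j) ^ 2 := fun j => by
      simp [hw, Real.norm_eq_abs, δ, sq_abs]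
    rw [Finset.sum_congr rfl fun j _ => this j]
  have hub : ‖(z : T3)‖ ≤ Real.sqrt (∑ j, δ (z j) ^ 2) := by
    rw [hzw, ← hwnorm]
    exact QuotientAddGroup.norm_mk_le_norm
  have hlb : Real.sqrt (∑ j, δ (z j) ^ 2) ≤ ‖(z : T3)‖ := by
    rw [QuotientAddGroup.le_norm_iff]
    intro m hm
    have hmem2 : m - z ∈ intLattice := (QuotientAddGroup.eq_iff_sub_mem).mp hm
    rw [EuclideanSpace.norm_eq]
    apply Real.sqrt_le_sqrt
    refine Finset.sum_le_sum fun j _ => ?_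
    obtain ⟨n, hn⟩ := hmem2 j
    have hδ : δ (z j) = δ (m j) := by
      have : z j = m j - n := by
        rw [PiLp.sub_apply] at hn; linarith
      rw [this, δ_int_sub]
    rw [Real.norm_eq_abs]
    have h1 : δ (m j) ≤ |m j| := by
      simpa using δ_le (m j) 0
    have h0 := δ_nonneg (z j)
    rw [hδ]
    nlinarith [abs_nonneg (m j), δ_nonneg (m j)]
  linarith

lemma dist_mk_sq (x y : Fin 3 → ℝ) :
    dist (tomk x) (tomk y) ^ 2 =
      δ (x 0 - y 0) ^ 2 + δ (x 1 - y 1) ^ 2 + δ (x 2 - y 2) ^ 2 := by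
  have h1 : tomk x - tomk y = ((tov x - tov y : E3) : T3) := by
    simp [tomk, QuotientAddGroup.mk_sub]
  rw [dist_eq_norm, h1, norm_mk_eq]
  rw [Real.sq_sqrt (Finset.sum_nonneg fun j _ => sq_nonneg _)]
  rw [Fin.sum_univ_three]
  simp [PiLp.sub_apply]

lemma dist_mk_nonneg (x y : T3) : 0 ≤ dist x y := dist_nonneg

end TorusProof

namespace TorusProof

-- special points
def zz : T3 := tomk (fun _ => 0)
def cc : T3 := tomk (fun _ => 1/2)
def hf (i : Fin 3) : T3 := tomk (fun j => if j = i then 1/2 else 0)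
def qt (i : Fin 3) (s : ℝ) : T3 := tomk (fun j => if j = i then s/4 else 0)

-- mk equality from coordinatewise integer differences
lemma tomk_eq_tomk {x y : Fin 3 → ℝ}
    (h : ∀ j, ∃ n : ℤ, x j - y j = n) : tomk x = tomk y := by
  refine (QuotientAddGroup.eq_iff_sub_mem).mpr ?_
  intro j
  obtain ⟨n, hn⟩ := h j
  exact ⟨n, by rw [PiLp.sub_apply]; exact hn⟩

-- distances of special points to each other, squared
lemma dist_sq_to_zz (x : Fin 3 → ℝ) :
    dist (tomk x) zz ^ 2 = δ (x 0) ^ 2 + δ (x 1) ^ 2 + δ (x 2) ^ 2 := by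
  rw [zz, dist_mk_sq]; norm_num

lemma dist_sq_to_cc (x : Fin 3 → ℝ) :
    dist (tomk x) cc ^ 2 =
      (1/2 - δ (x 0)) ^ 2 + (1/2 - δ (x 1)) ^ 2 + (1/2 - δ (x 2)) ^ 2 := by
  rw [cc, dist_mk_sq, δ_sub_half, δ_sub_half, δ_sub_half]

/-- the unique point at maximal distance from zz -/
lemma char_cc (x : Fin 3 → ℝ) (h : dist (tomk x) zz ^ 2 = 3/4) : tomk x = cc := by
  rw [dist_sq_to_zz] at h
  have h0 := δ_le_half (x 0); have h1 := δ_le_half (x 1); have h2 := δ_le_half (x 2)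
  have n0 := δ_nonneg (x 0); have n1 := δ_nonneg (x 1); have n2 := δ_nonneg (x 2)
  have e0 : δ (x 0) = 1/2 := by nlinarith
  have e1 : δ (x 1) = 1/2 := by nlinarith
  have e2 : δ (x 2) = 1/2 := by nlinarith
  refine tomk_eq_tomk fun j => ?_
  fin_cases j
  · obtain ⟨n, hn⟩ := eq_of_δ_eq_half _ e0; exact ⟨n, show x 0 - 1/2 = (n:ℝ) by rw [hn]; ring⟩
  · obtain ⟨n, hn⟩ := eq_of_δ_eq_half _ e1; exact ⟨n, show x 1 - 1/2 = (n:ℝ) by rw [hn]; ring⟩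
  · obtain ⟨n, hn⟩ := eq_of_δ_eq_half _ e2; exact ⟨n, show x 2 - 1/2 = (n:ℝ) by rw [hn]; ring⟩

/-- helper: from sum = s and sum of squares = s^2 with nonneg entries bounded,
exactly-one-coordinate structure -/
lemma one_hot (a0 a1 a2 s : ℝ) (hn0 : 0 ≤ a0) (hn1 : 0 ≤ a1) (hn2 : 0 ≤ a2)
    (hsum : a0 + a1 + a2 = s) (hsq : a0^2 + a1^2 + a2^2 = s^2) :
    (a0 = s ∧ a1 = 0 ∧ a2 = 0) ∨ (a1 = s ∧ a0 = 0 ∧ a2 = 0) ∨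
    (a2 = s ∧ a0 = 0 ∧ a1 = 0) := by
  have hp : a0*a1 + a0*a2 + a1*a2 = 0 := by nlinarith
  have p01 : a0*a1 = 0 := by nlinarith [mul_nonneg hn0 hn1, mul_nonneg hn0 hn2, mul_nonneg hn1 hn2]
  have p02 : a0*a2 = 0 := by nlinarith [mul_nonneg hn0 hn1, mul_nonneg hn0 hn2, mul_nonneg hn1 hn2]
  have p12 : a1*a2 = 0 := by nlinarith [mul_nonneg hn0 hn1, mul_nonneg hn0 hn2, mul_nonneg hn1 hn2]
  by_cases h0 : a0 = 0
  · by_cases h1 : a1 = 0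
    · right; right; exact ⟨by linarith, h0, h1⟩
    · have h2 : a2 = 0 := by
        rcases mul_eq_zero.mp p12 with h | h
        · exact absurd h h1
        · exact h
      right; left; exact ⟨by linarith, h0, h2⟩
  · have h1 : a1 = 0 := by
      rcases mul_eq_zero.mp p01 with h | h
      · exact absurd h h0
      · exact h
    have h2 : a2 = 0 := by
      rcases mul_eq_zero.mp p02 with h | h
      · exact absurd h h0
      · exact h
    left; exact ⟨by linarith, h1, h2⟩

end TorusProof

namespace TorusProof

lemma coord_cases (x : Fin 3 → ℝ) (y0 y1 y2 : ℝ)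
    (h0 : ∃ n : ℤ, x 0 - y0 = n) (h1 : ∃ n : ℤ, x 1 - y1 = n)
    (h2 : ∃ n : ℤ, x 2 - y2 = n) : tomk x = tomk ![y0, y1, y2] :=
  tomk_eq_tomk fun j => by fin_cases j <;> [exact h0; exact h1; exact h2]

lemma half_shift {v : ℝ} (h : δ v = 1/2) : ∃ n : ℤ, v - 1/2 = n := by
  obtain ⟨n, hn⟩ := eq_of_δ_eq_half _ h; exact ⟨n, by rw [hn]; ring⟩

lemma zero_shift {v : ℝ} (h : δ v = 0) : ∃ n : ℤ, v - 0 = n := by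
  obtain ⟨n, hn⟩ := eq_int_of_δ_eq_zero _ h; exact ⟨n, by rw [hn]; ring⟩

lemma quarter_shift {v : ℝ} (h : δ v = 1/4) :
    (∃ n : ℤ, v - 1/4 = n) ∨ (∃ n : ℤ, v - (-(1/4)) = n) := by
  rcases eq_of_δ_eq_quarter _ h with ⟨n, hn⟩ | ⟨n, hn⟩
  · exact Or.inl ⟨n, by rw [hn]; ring⟩
  · exact Or.inr ⟨n, by rw [hn]; ring⟩

/-- characterization of the half points -/
lemma char_hf (x : Fin 3 → ℝ) (h1 : dist (tomk x) zz ^ 2 = 1/4)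
    (h2 : dist (tomk x) cc ^ 2 = 1/2) :
    tomk x = tomk ![1/2, 0, 0] ∨ tomk x = tomk ![0, 1/2, 0] ∨
      tomk x = tomk ![0, 0, 1/2] := by
  rw [dist_sq_to_zz] at h1
  rw [dist_sq_to_cc] at h2
  have hn0 : 0 ≤ δ (x 0) := δ_nonneg _
  have hn1 : 0 ≤ δ (x 1) := δ_nonneg _
  have hn2 : 0 ≤ δ (x 2) := δ_nonneg _
  have hsum : δ (x 0) + δ (x 1) + δ (x 2) = 1/2 := by nlinarith
  rcases one_hot _ _ _ (1/2) hn0 hn1 hn2 hsum (by nlinarith) with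
    ⟨e0, e1, e2⟩ | ⟨e1, e0, e2⟩ | ⟨e2, e0, e1⟩
  · exact Or.inl (coord_cases x _ _ _ (half_shift e0) (zero_shift e1) (zero_shift e2))
  · exact Or.inr (Or.inl (coord_cases x _ _ _ (zero_shift e0) (half_shift e1) (zero_shift e2)))
  · exact Or.inr (Or.inr (coord_cases x _ _ _ (zero_shift e0) (zero_shift e1) (half_shift e2)))

/-- characterization of the quarter points -/
lemma char_qt (x : Fin 3 → ℝ) (h1 : dist (tomk x) zz ^ 2 = 1/16)
    (h2 : dist (tomk x) cc ^ 2 = 9/16) :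
    tomk x = tomk ![1/4, 0, 0] ∨ tomk x = tomk ![-(1/4), 0, 0] ∨
    tomk x = tomk ![0, 1/4, 0] ∨ tomk x = tomk ![0, -(1/4), 0] ∨
    tomk x = tomk ![0, 0, 1/4] ∨ tomk x = tomk ![0, 0, -(1/4)] := by
  rw [dist_sq_to_zz] at h1
  rw [dist_sq_to_cc] at h2
  have hn0 : 0 ≤ δ (x 0) := δ_nonneg _
  have hn1 : 0 ≤ δ (x 1) := δ_nonneg _
  have hn2 : 0 ≤ δ (x 2) := δ_nonneg _
  have hsum : δ (x 0) + δ (x 1) + δ (x 2) = 1/4 := by nlinarith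
  rcases one_hot _ _ _ (1/4) hn0 hn1 hn2 hsum (by nlinarith) with
    ⟨e0, e1, e2⟩ | ⟨e1, e0, e2⟩ | ⟨e2, e0, e1⟩
  · rcases quarter_shift e0 with h | h
    · exact Or.inl (coord_cases x _ _ _ h (zero_shift e1) (zero_shift e2))
    · exact Or.inr (Or.inl (coord_cases x _ _ _ h (zero_shift e1) (zero_shift e2)))
  · rcases quarter_shift e1 with h | h
    · exact Or.inr (Or.inr (Or.inl
        (coord_cases x _ _ _ (zero_shift e0) h (zero_shift e2))))
    · exact Or.inr (Or.inr (Or.inr (Or.inl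
        (coord_cases x _ _ _ (zero_shift e0) h (zero_shift e2)))))
  · rcases quarter_shift e2 with h | h
    · exact Or.inr (Or.inr (Or.inr (Or.inr (Or.inl
        (coord_cases x _ _ _ (zero_shift e0) (zero_shift e1) h)))))
    · exact Or.inr (Or.inr (Or.inr (Or.inr (Or.inr
        (coord_cases x _ _ _ (zero_shift e0) (zero_shift e1) h)))))

end TorusProof

namespace TorusProof

lemma sq_eq_of_nonneg {a b : ℝ} (ha : 0 ≤ a) (hb : 0 ≤ b) (h : a^2 = b^2) : a = b := by
  rcases mul_eq_zero.mp (show (a-b)*(a+b) = 0 by nlinarith) with h' | h'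
  · linarith
  · linarith

-- squared distances to the seven resolving points
lemma dist_sq_hf0 (x : Fin 3 → ℝ) : dist (tomk x) (tomk ![1/2,0,0]) ^ 2 =
    (1/2 - δ (x 0))^2 + δ (x 1)^2 + δ (x 2)^2 := by
  rw [dist_mk_sq]
  norm_num [δ_sub_half, Matrix.cons_val_two, Matrix.tail_cons, Matrix.head_cons]

end TorusProof

namespace TorusProof

lemma dist_sq_hf1 (x : Fin 3 → ℝ) : dist (tomk x) (tomk ![0,1/2,0]) ^ 2 =
    δ (x 0)^2 + (1/2 - δ (x 1))^2 + δ (x 2)^2 := by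
  rw [dist_mk_sq]; norm_num [δ_sub_half, Matrix.cons_val_two, Matrix.tail_cons, Matrix.head_cons]

lemma dist_sq_hf2 (x : Fin 3 → ℝ) : dist (tomk x) (tomk ![0,0,1/2]) ^ 2 =
    δ (x 0)^2 + δ (x 1)^2 + (1/2 - δ (x 2))^2 := by
  rw [dist_mk_sq]; norm_num [δ_sub_half, Matrix.cons_val_two, Matrix.tail_cons, Matrix.head_cons]

lemma dist_sq_qt0 (x : Fin 3 → ℝ) : dist (tomk x) (tomk ![1/4,0,0]) ^ 2 =
    δ (x 0 - 1/4)^2 + δ (x 1)^2 + δ (x 2)^2 := by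
  rw [dist_mk_sq]; norm_num [Matrix.cons_val_two, Matrix.tail_cons, Matrix.head_cons]

lemma dist_sq_qt1 (x : Fin 3 → ℝ) : dist (tomk x) (tomk ![0,1/4,0]) ^ 2 =
    δ (x 0)^2 + δ (x 1 - 1/4)^2 + δ (x 2)^2 := by
  rw [dist_mk_sq]; norm_num [Matrix.cons_val_two, Matrix.tail_cons, Matrix.head_cons]

lemma dist_sq_qt2 (x : Fin 3 → ℝ) : dist (tomk x) (tomk ![0,0,1/4]) ^ 2 =
    δ (x 0)^2 + δ (x 1)^2 + δ (x 2 - 1/4)^2 := by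
  rw [dist_mk_sq]; norm_num [Matrix.cons_val_two, Matrix.tail_cons, Matrix.head_cons]

/-- the seven-point resolving set determines points of the torus -/
lemma resolving (x y : Fin 3 → ℝ)
    (h0 : dist (tomk x) zz = dist (tomk y) zz)
    (hh0 : dist (tomk x) (tomk ![1/2,0,0]) = dist (tomk y) (tomk ![1/2,0,0]))
    (hh1 : dist (tomk x) (tomk ![0,1/2,0]) = dist (tomk y) (tomk ![0,1/2,0]))
    (hh2 : dist (tomk x) (tomk ![0,0,1/2]) = dist (tomk y) (tomk ![0,0,1/2]))
    (hq0 : dist (tomk x) (tomk ![1/4,0,0]) = dist (tomk y) (tomk ![1/4,0,0]))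
    (hq1 : dist (tomk x) (tomk ![0,1/4,0]) = dist (tomk y) (tomk ![0,1/4,0]))
    (hq2 : dist (tomk x) (tomk ![0,0,1/4]) = dist (tomk y) (tomk ![0,0,1/4])) :
    tomk x = tomk y := by
  have s0 : dist (tomk x) zz ^ 2 = dist (tomk y) zz ^ 2 := by rw [h0]
  have sh0 : dist (tomk x) (tomk ![1/2,0,0]) ^ 2 = dist (tomk y) (tomk ![1/2,0,0]) ^ 2 := by
    rw [hh0]
  have sh1 : dist (tomk x) (tomk ![0,1/2,0]) ^ 2 = dist (tomk y) (tomk ![0,1/2,0]) ^ 2 := by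
    rw [hh1]
  have sh2 : dist (tomk x) (tomk ![0,0,1/2]) ^ 2 = dist (tomk y) (tomk ![0,0,1/2]) ^ 2 := by
    rw [hh2]
  have sq0 : dist (tomk x) (tomk ![1/4,0,0]) ^ 2 = dist (tomk y) (tomk ![1/4,0,0]) ^ 2 := by
    rw [hq0]
  have sq1 : dist (tomk x) (tomk ![0,1/4,0]) ^ 2 = dist (tomk y) (tomk ![0,1/4,0]) ^ 2 := by
    rw [hq1]
  have sq2 : dist (tomk x) (tomk ![0,0,1/4]) ^ 2 = dist (tomk y) (tomk ![0,0,1/4]) ^ 2 := by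
    rw [hq2]
  simp only [dist_sq_to_zz, dist_sq_hf0, dist_sq_hf1, dist_sq_hf2,
    dist_sq_qt0, dist_sq_qt1, dist_sq_qt2] at s0 sh0 sh1 sh2 sq0 sq1 sq2
  have e0 : δ (x 0) = δ (y 0) := by linear_combination s0 - sh0
  have e1 : δ (x 1) = δ (y 1) := by linear_combination s0 - sh1
  have e2 : δ (x 2) = δ (y 2) := by linear_combination s0 - sh2
  have f0 : δ (x 0 - 1/4) = δ (y 0 - 1/4) :=
    sq_eq_of_nonneg (δ_nonneg _) (δ_nonneg _)
      (by linear_combination sq0 - s0 + (δ (x 0) + δ (y 0)) * e0)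
  have f1 : δ (x 1 - 1/4) = δ (y 1 - 1/4) :=
    sq_eq_of_nonneg (δ_nonneg _) (δ_nonneg _)
      (by linear_combination sq1 - s0 + (δ (x 1) + δ (y 1)) * e1)
  have f2 : δ (x 2 - 1/4) = δ (y 2 - 1/4) :=
    sq_eq_of_nonneg (δ_nonneg _) (δ_nonneg _)
      (by linear_combination sq2 - s0 + (δ (x 2) + δ (y 2)) * e2)
  refine tomk_eq_tomk fun j => ?_
  fin_cases j
  · exact δ_quarter _ _ e0 f0
  · exact δ_quarter _ _ e1 f1
  · exact δ_quarter _ _ e2 f2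

end TorusProof

namespace TorusProof

abbrev G3 := T3 ≃ᵢ T3

/-- the subgroup of translations -/
def Ntr : Subgroup G3 where
  carrier := {f | ∃ v : T3, ∀ x, f x = x + v}
  one_mem' := ⟨0, fun x => by simp [IsometryEquiv.coe_one]⟩
  mul_mem' := by
    rintro f g ⟨v, hv⟩ ⟨w, hw⟩
    exact ⟨w + v, fun x => by
      rw [IsometryEquiv.mul_apply, hw, hv, add_assoc]⟩
  inv_mem' := by
    rintro f ⟨v, hv⟩
    refine ⟨-v, fun x => ?_⟩
    have : f (x + -v) = x := by rw [hv]; abel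
    calc f⁻¹ x = f⁻¹ (f (x + -v)) := by rw [this]
    _ = x + -v := f.symm_apply_apply _

lemma Ntr_comm {f g : G3} (hf : f ∈ Ntr) (hg : g ∈ Ntr) : f * g = g * f := by
  obtain ⟨v, hv⟩ := hf
  obtain ⟨w, hw⟩ := hg
  refine IsometryEquiv.ext fun x => ?_
  rw [IsometryEquiv.mul_apply, IsometryEquiv.mul_apply, hv, hw, hv, hw]
  abel

def trIso (v : T3) : G3 := IsometryEquiv.addRight v

lemma trIso_mem (v : T3) : trIso v ∈ Ntr := ⟨v, fun x => rfl⟩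

lemma zz_eq_zero : zz = (0 : T3) := by
  have : tov (fun _ => (0:ℝ)) = (0 : E3) := rfl
  simp [zz, tomk, this]

/-- squared-distance equalities transfer along isometries -/
lemma iso_dist_sq (f : G3) (a b : T3) : dist (f a) (f b) = dist a b :=
  f.isometry.dist_eq a b

-- numeric distance values
lemma dval_cc : dist cc zz ^ 2 = 3/4 := by
  rw [cc, zz, dist_mk_sq]; norm_num [δ_half]

lemma dval_hf_zz : ∀ p ∈ ({tomk ![1/2,0,0], tomk ![0,1/2,0], tomk ![0,0,1/2]} : Set T3),
    dist p zz ^ 2 = 1/4 := by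
  rintro p (rfl | rfl | rfl) <;> (rw [zz, dist_mk_sq]; norm_num [δ_half, δ_zero, Matrix.cons_val_two, Matrix.tail_cons, Matrix.head_cons])

lemma dval_hf_cc : ∀ p ∈ ({tomk ![1/2,0,0], tomk ![0,1/2,0], tomk ![0,0,1/2]} : Set T3),
    dist p cc ^ 2 = 1/2 := by
  rintro p (rfl | rfl | rfl) <;>
    (rw [cc, dist_mk_sq]; norm_num [δ_neg_half, δ_zero, δ_sub_half, δ_half, Matrix.cons_val_two, Matrix.tail_cons, Matrix.head_cons])

lemma dval_qt_zz : ∀ p ∈ ({tomk ![1/4,0,0], tomk ![0,1/4,0], tomk ![0,0,1/4]} : Set T3),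
    dist p zz ^ 2 = 1/16 := by
  rintro p (rfl | rfl | rfl) <;> (rw [zz, dist_mk_sq]; norm_num [δ_quarter_val, δ_zero, Matrix.cons_val_two, Matrix.tail_cons, Matrix.head_cons])

lemma dval_qt_cc : ∀ p ∈ ({tomk ![1/4,0,0], tomk ![0,1/4,0], tomk ![0,0,1/4]} : Set T3),
    dist p cc ^ 2 = 9/16 := by
  rintro p (rfl | rfl | rfl) <;>
    (rw [cc, dist_mk_sq]; norm_num [δ_neg_quarter, δ_neg_half, δ_zero, δ_sub_half, δ_half, Matrix.cons_val_two, Matrix.tail_cons, Matrix.head_cons])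

end TorusProof

namespace TorusProof

/-- the target finite set for images of resolving points -/
def Tset : Set T3 :=
  {zz, tomk ![1/2,0,0], tomk ![0,1/2,0], tomk ![0,0,1/2],
   tomk ![1/4,0,0], tomk ![-(1/4),0,0], tomk ![0,1/4,0], tomk ![0,-(1/4),0],
   tomk ![0,0,1/4], tomk ![0,0,-(1/4)]}

lemma Tset_finite : Tset.Finite := by
  unfold Tset
  apply Set.Finite.insert; apply Set.Finite.insert; apply Set.Finite.insert
  apply Set.Finite.insert; apply Set.Finite.insert; apply Set.Finite.insert
  apply Set.Finite.insert; apply Set.Finite.insert; apply Set.Finite.insert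
  exact Set.finite_singleton _

/-- resolving points -/
def rsp : Fin 7 → T3 :=
  ![zz, tomk ![1/2,0,0], tomk ![0,1/2,0], tomk ![0,0,1/2],
    tomk ![1/4,0,0], tomk ![0,1/4,0], tomk ![0,0,1/4]]

/-- every point of the torus has a functional representative -/
lemma exists_rep (t : T3) : ∃ x : Fin 3 → ℝ, tomk x = t := by
  obtain ⟨w, hw⟩ := QuotientAddGroup.mk_surjective t
  refine ⟨fun j => w j, ?_⟩
  rw [← hw]
  congr 1

/-- an isometry fixing zz fixes cc -/
lemma fix_cc {f : G3} (hf : f zz = zz) : f cc = cc := by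
  obtain ⟨x, hx⟩ := exists_rep (f cc)
  have hd : dist (f cc) zz ^ 2 = 3/4 := by
    rw [← hf, iso_dist_sq, dval_cc]
  rw [← hx] at *
  exact char_cc x hd

/-- images of half points under a stabilizing isometry -/
lemma image_hf {f : G3} (hf : f zz = zz)
    {p : T3} (hp : p ∈ ({tomk ![1/2,0,0], tomk ![0,1/2,0], tomk ![0,0,1/2]} : Set T3)) :
    f p ∈ ({tomk ![1/2,0,0], tomk ![0,1/2,0], tomk ![0,0,1/2]} : Set T3) := by
  obtain ⟨x, hx⟩ := exists_rep (f p)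
  have h1 : dist (f p) zz ^ 2 = 1/4 := by rw [← hf, iso_dist_sq]; exact dval_hf_zz p hp
  have h2 : dist (f p) cc ^ 2 = 1/2 := by
    rw [← fix_cc hf, iso_dist_sq]; exact dval_hf_cc p hp
  rw [← hx] at h1 h2 ⊢
  rcases char_hf x h1 h2 with h | h | h
  · exact Or.inl h
  · exact Or.inr (Or.inl h)
  · exact Or.inr (Or.inr h)

/-- images of (positive) quarter points under a stabilizing isometry -/
lemma image_qt {f : G3} (hf : f zz = zz)
    {p : T3} (hp : p ∈ ({tomk ![1/4,0,0], tomk ![0,1/4,0], tomk ![0,0,1/4]} : Set T3)) :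
    f p ∈ ({tomk ![1/4,0,0], tomk ![-(1/4),0,0], tomk ![0,1/4,0], tomk ![0,-(1/4),0],
            tomk ![0,0,1/4], tomk ![0,0,-(1/4)]} : Set T3) := by
  obtain ⟨x, hx⟩ := exists_rep (f p)
  have h1 : dist (f p) zz ^ 2 = 1/16 := by rw [← hf, iso_dist_sq]; exact dval_qt_zz p hp
  have h2 : dist (f p) cc ^ 2 = 9/16 := by
    rw [← fix_cc hf, iso_dist_sq]; exact dval_qt_cc p hp
  rw [← hx] at h1 h2 ⊢
  rcases char_qt x h1 h2 with h | h | h | h | h | h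
  · exact Or.inl h
  · exact Or.inr (Or.inl h)
  · exact Or.inr (Or.inr (Or.inl h))
  · exact Or.inr (Or.inr (Or.inr (Or.inl h)))
  · exact Or.inr (Or.inr (Or.inr (Or.inr (Or.inl h))))
  · exact Or.inr (Or.inr (Or.inr (Or.inr (Or.inr h))))

lemma image_rsp {f : G3} (hf : f zz = zz) (i : Fin 7) : f (rsp i) ∈ Tset := by
  have mhf : ∀ p, p ∈ ({tomk ![1/2,0,0], tomk ![0,1/2,0], tomk ![0,0,1/2]} : Set T3) →
      f p ∈ Tset := by
    intro p hp
    rcases image_hf hf hp with h | h | h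
    · exact Or.inr (Or.inl h)
    · exact Or.inr (Or.inr (Or.inl h))
    · exact Or.inr (Or.inr (Or.inr (Or.inl h)))
  have mqt : ∀ p, p ∈ ({tomk ![1/4,0,0], tomk ![0,1/4,0], tomk ![0,0,1/4]} : Set T3) →
      f p ∈ Tset := by
    intro p hp
    rcases image_qt hf hp with h | h | h | h | h | h
    · exact Or.inr (Or.inr (Or.inr (Or.inr (Or.inl h))))
    · exact Or.inr (Or.inr (Or.inr (Or.inr (Or.inr (Or.inl h)))))
    · exact Or.inr (Or.inr (Or.inr (Or.inr (Or.inr (Or.inr (Or.inl h))))))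
    · exact Or.inr (Or.inr (Or.inr (Or.inr (Or.inr (Or.inr (Or.inr (Or.inl h)))))))
    · exact Or.inr (Or.inr (Or.inr (Or.inr (Or.inr (Or.inr (Or.inr (Or.inr (Or.inl h))))))))
    · exact Or.inr (Or.inr (Or.inr (Or.inr (Or.inr (Or.inr (Or.inr (Or.inr (Or.inr h))))))))
  fin_cases i
  · show f zz ∈ Tset
    rw [hf]; exact Or.inl rfl
  · exact mhf _ (Or.inl rfl)
  · exact mhf _ (Or.inr (Or.inl rfl))
  · exact mhf _ (Or.inr (Or.inr rfl))
  · exact mqt _ (Or.inl rfl)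
  · exact mqt _ (Or.inr (Or.inl rfl))
  · exact mqt _ (Or.inr (Or.inr rfl))

/-- two isometries fixing zz agreeing on the resolving points agree -/
lemma stab_ext {f g : G3} (h : ∀ i : Fin 7, f (rsp i) = g (rsp i)) : f = g := by
  have key : ∀ t : T3, (f⁻¹ * g) t = t := by
    intro t
    obtain ⟨x, hx⟩ := exists_rep t
    subst hx
    obtain ⟨y, hy⟩ := exists_rep ((f⁻¹ * g) (tomk x))
    have hfix : ∀ i : Fin 7, (f⁻¹ * g) (rsp i) = rsp i := by
      intro i
      rw [IsometryEquiv.mul_apply, ← h i, IsometryEquiv.inv_apply_self]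
    have hd : ∀ i : Fin 7, dist ((f⁻¹ * g) (tomk x)) (rsp i) = dist (tomk x) (rsp i) := by
      intro i
      conv_lhs => rw [← hfix i]
      exact iso_dist_sq (f⁻¹ * g) (tomk x) (rsp i)
    rw [← hy] at hd ⊢
    exact resolving y x (hd 0) (hd 1) (hd 2) (hd 3) (hd 4) (hd 5) (hd 6)
  have : f⁻¹ * g = 1 := IsometryEquiv.ext fun t => key t
  have := congrArg (fun e => f * e) this
  simpa [mul_assoc] using this.symm

instance stab_finite : Finite {f : G3 // f zz = zz} := by
  have : Finite Tset := Tset_finite.to_subtype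
  refine Finite.of_injective
    (fun f => (fun i => (⟨f.1 (rsp i), image_rsp f.2 i⟩ : Tset) : Fin 7 → Tset)) ?_
  intro f g hfg
  apply Subtype.ext
  refine stab_ext fun i => ?_
  have := congrFun hfg i
  simpa using congrArg Subtype.val this

/-- the quotient of the isometry group by translations is finite -/
instance quot_finite : Finite (G3 ⧸ Ntr) := by
  refine Finite.of_surjective
    (fun f : {f : G3 // f zz = zz} => ((f.1 : G3) : G3 ⧸ Ntr)) ?_
  intro q
  obtain ⟨g, rfl⟩ := QuotientGroup.mk_surjective q
  refine ⟨⟨g * trIso (g⁻¹ zz), ?_⟩, ?_⟩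
  · rw [IsometryEquiv.mul_apply]
    have : trIso (g⁻¹ zz) zz = zz + g⁻¹ zz := rfl
    rw [this, zz_eq_zero, zero_add, IsometryEquiv.apply_inv_self]
  · refine (QuotientGroup.eq).mpr ?_
    have : (g * trIso (g⁻¹ zz))⁻¹ * g = (trIso (g⁻¹ zz))⁻¹ := by group
    rw [this]
    exact Ntr.inv_mem (trIso_mem _)

end TorusProof

namespace TorusProof
open Real

def RxM (θ : ℝ) : Matrix (Fin 3) (Fin 3) ℝ :=
  !![1, 0, 0; 0, Real.cos θ, -Real.sin θ; 0, Real.sin θ, Real.cos θ]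

def RzM (θ : ℝ) : Matrix (Fin 3) (Fin 3) ℝ :=
  !![Real.cos θ, -Real.sin θ, 0; Real.sin θ, Real.cos θ, 0; 0, 0, 1]

lemma RxM_mem (θ : ℝ) : RxM θ ∈ Matrix.specialOrthogonalGroup (Fin 3) ℝ := by
  constructor
  · show RxM θ ∈ Matrix.unitaryGroup (Fin 3) ℝ
    rw [Matrix.mem_unitaryGroup_iff]
    ext i j
    fin_cases i <;> fin_cases j <;>
      simp [RxM, Matrix.mul_apply, Fin.sum_univ_three, Matrix.conjTranspose_apply,
        Matrix.one_apply, Matrix.vecHead, Matrix.vecTail] <;>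
      nlinarith [Real.sin_sq_add_cos_sq θ]
  · show (RxM θ).det = 1
    simp [RxM, Matrix.det_fin_three]
    nlinarith [Real.sin_sq_add_cos_sq θ]

lemma RzM_mem (θ : ℝ) : RzM θ ∈ Matrix.specialOrthogonalGroup (Fin 3) ℝ := by
  constructor
  · show RzM θ ∈ Matrix.unitaryGroup (Fin 3) ℝ
    rw [Matrix.mem_unitaryGroup_iff]
    ext i j
    fin_cases i <;> fin_cases j <;>
      simp [RzM, Matrix.mul_apply, Fin.sum_univ_three, Matrix.conjTranspose_apply,
        Matrix.one_apply, Matrix.vecHead, Matrix.vecTail] <;>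
      nlinarith [Real.sin_sq_add_cos_sq θ]
  · show (RzM θ).det = 1
    simp [RzM, Matrix.det_fin_three]
    nlinarith [Real.sin_sq_add_cos_sq θ]

lemma RxM_mul (a b : ℝ) : RxM a * RxM b = RxM (a + b) := by
  ext i j
  fin_cases i <;> fin_cases j <;>
    simp [RxM, Matrix.mul_apply, Fin.sum_univ_three, Real.cos_add, Real.sin_add, Matrix.vecHead, Matrix.vecTail] <;> ring

lemma RzM_mul (a b : ℝ) : RzM a * RzM b = RzM (a + b) := by
  ext i j
  fin_cases i <;> fin_cases j <;>
    simp [RzM, Matrix.mul_apply, Fin.sum_univ_three, Real.cos_add, Real.sin_add, Matrix.vecHead, Matrix.vecTail] <;> ring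

lemma RxM_zero : RxM 0 = 1 := by
  ext i j
  fin_cases i <;> fin_cases j <;> simp [RxM, Matrix.one_apply, Matrix.vecHead, Matrix.vecTail]

lemma RzM_zero : RzM 0 = 1 := by
  ext i j
  fin_cases i <;> fin_cases j <;> simp [RzM, Matrix.one_apply, Matrix.vecHead, Matrix.vecTail]

lemma RxM_pow (a : ℝ) (n : ℕ) : RxM a ^ n = RxM (n * a) := by
  induction n with
  | zero => simp [RxM_zero]
  | succ k ih =>
    rw [pow_succ, ih, RxM_mul]
    congr 1
    push_cast; ring

lemma RzM_pow (a : ℝ) (n : ℕ) : RzM a ^ n = RzM (n * a) := by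
  induction n with
  | zero => simp [RzM_zero]
  | succ k ih =>
    rw [pow_succ, ih, RzM_mul]
    congr 1
    push_cast; ring

lemma Rx_Rz_ne : RxM (π/2) * RzM (π/2) ≠ RzM (π/2) * RxM (π/2) := by
  intro heq
  have := congrFun (congrFun heq 1) 0
  simp [RxM, RzM, Matrix.mul_apply, Fin.sum_univ_three, Matrix.vecHead, Matrix.vecTail] at this

end TorusProof


/-- The flat 3-torus admits no faithful action of the rotation group `SO(3)` by
isometries: there is no injective group homomorphism from `SO(3)` into the group of
isometry equivalences of the flat 3-torus.  The torus is locally isotropic but not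
globally isotropic. -/
theorem no_faithful_SO3_action_on_torus3 :
    ¬ ∃ φ : Matrix.specialOrthogonalGroup (Fin 3) ℝ →* (Torus3 ≃ᵢ Torus3),
      Function.Injective φ := by
  rintro ⟨φ, hinj⟩
  haveI : TorusProof.Ntr.FiniteIndex := Subgroup.finiteIndex_of_finite_quotient
  set K := TorusProof.Ntr.normalCore with hK
  set m := K.index with hmdef
  have hm0 : m ≠ 0 := Subgroup.FiniteIndex.index_ne_zero
  have hmR : (m : ℝ) ≠ 0 := Nat.cast_ne_zero.mpr hm0
  set α := Real.pi / 2 / m with hα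
  set g : Matrix.specialOrthogonalGroup (Fin 3) ℝ := ⟨TorusProof.RxM α, TorusProof.RxM_mem α⟩
    with hg
  set h : Matrix.specialOrthogonalGroup (Fin 3) ℝ := ⟨TorusProof.RzM α, TorusProof.RzM_mem α⟩
    with hh
  have h1 : (φ g) ^ m ∈ K := K.pow_index_mem (φ g)
  have h2 : (φ h) ^ m ∈ K := K.pow_index_mem (φ h)
  have hcomm : (φ g) ^ m * (φ h) ^ m = (φ h) ^ m * (φ g) ^ m :=
    TorusProof.Ntr_comm (TorusProof.Ntr.normalCore_le h1) (TorusProof.Ntr.normalCore_le h2)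
  have heq : g ^ m * h ^ m = h ^ m * g ^ m := by
    apply hinj
    rw [map_mul, map_mul, map_pow, map_pow]
    exact hcomm
  have hval := congrArg Subtype.val heq
  simp only [MulMemClass.coe_mul, SubmonoidClass.coe_pow, hg, hh] at hval
  rw [TorusProof.RxM_pow, TorusProof.RzM_pow] at hval
  have hcast : (m : ℝ) * α = Real.pi / 2 := by
    rw [hα]; field_simp
  rw [hcast] at hval
  exact TorusProof.Rx_Rz_ne hval
end
end
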